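/- arXiv:2512.09082 — 15 statements merged into one kernel-verified Lean document; each statement's English description precedes it below -/
import Mathlib

section
/- An outer sequence d_0 = m, d_1 = d, d_2, ..., d_r is strictly decreasing, ends with d_r = gcd(m,d), and for any integers 1 ≤ d < m there exists a unique outer sequence starting with m, d. -/
/-- An outer sequence `d 0, d 1, ..., d r` of positive integers: setting `d (r+1) = 0`,
for each `1 ≤ i ≤ r` the quantity `(d (i-1) + d (i+1)) / d i` is an integer `≥ 2`. -/
def IsOuterSeq (r : ℕ) (d : ℕ → ℕ) : Prop :=
  (∀ i ≤ r, 0 < d i) ∧ d (r + 1) = 0 ∧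
    ∀ i, 1 ≤ i → i ≤ r → d i ∣ d (i - 1) + d (i + 1) ∧ 2 * d i ≤ d (i - 1) + d (i + 1)

lemma outer_dec_aux {r : ℕ} {d : ℕ → ℕ} (h : IsOuterSeq r d) :
    ∀ k i, i + k = r → 1 ≤ i → d i < d (i - 1) := by
  obtain ⟨hpos, hzero, hcond⟩ := h
  intro k
  induction k with
  | zero =>
    intro i hi h1
    have hir : i = r := by omega
    subst hir
    have hc := (hcond i h1 le_rfl).2
    rw [hzero] at hc
    have := hpos i le_rfl
    omega
  | succ k ih =>
    intro i hi h1
    have hd := ih (i + 1) (by omega) (by omega)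
    simp only [Nat.add_sub_cancel] at hd
    have hc := (hcond i h1 (by omega)).2
    omega

lemma outer_dec {r : ℕ} {d : ℕ → ℕ} (h : IsOuterSeq r d) :
    ∀ i < r, d (i + 1) < d i := by
  intro i hi
  have := outer_dec_aux h (r - (i + 1)) (i + 1) (by omega) (by omega)
  simpa using this

lemma outer_gcd {r : ℕ} {d : ℕ → ℕ} (h : IsOuterSeq r d) :
    ∀ j ≤ r, Nat.gcd (d j) (d (j + 1)) = Nat.gcd (d 0) (d 1) := by
  obtain ⟨hpos, hzero, hcond⟩ := h
  intro j
  induction j with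
  | zero => intro _; rfl
  | succ j ih =>
    intro hj
    have IH := ih (by omega)
    have hsum : d (j + 1) ∣ d j + d (j + 2) := by
      have := (hcond (j + 1) (by omega) hj).1
      simpa using this
    rw [← IH]
    apply Nat.dvd_antisymm
    · apply Nat.dvd_gcd
      · have h1 : Nat.gcd (d (j+1)) (d (j+2)) ∣ d j + d (j+2) :=
          (Nat.gcd_dvd_left _ _).trans hsum
        have h2 := Nat.dvd_sub h1 (Nat.gcd_dvd_right (d (j+1)) (d (j+2)))
        simpa using h2
      · exact Nat.gcd_dvd_left _ _
    · apply Nat.dvd_gcd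
      · exact Nat.gcd_dvd_right _ _
      · have h1 : Nat.gcd (d j) (d (j+1)) ∣ d j + d (j+2) :=
          (Nat.gcd_dvd_right _ _).trans hsum
        have h2 := Nat.dvd_sub h1 (Nat.gcd_dvd_left (d j) (d (j+1)))
        simpa using h2

lemma resid_unique {c a x y : ℕ} (hx : x < c) (hy : y < c)
    (dx : c ∣ a + x) (dy : c ∣ a + y) : x = y := by
  rcases le_total x y with hle | hle
  · have h0 := Nat.eq_zero_of_dvd_of_lt (Nat.dvd_sub dy dx)
      (show a + y - (a + x) < c by omega)
    omega
  · have h0 := Nat.eq_zero_of_dvd_of_lt (Nat.dvd_sub dx dy)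
      (show a + x - (a + y) < c by omega)
    omega

lemma outer_next_lt {r : ℕ} {d : ℕ → ℕ} (h : IsOuterSeq r d) :
    ∀ i ≤ r, d (i + 1) < d i := by
  intro i hi
  rcases lt_or_eq_of_le hi with hi | hi
  · exact outer_dec h i hi
  · subst hi
    rw [h.2.1]
    exact h.1 i le_rfl

lemma outer_unique {r r' : ℕ} {d d' : ℕ → ℕ} (h : IsOuterSeq r d) (h' : IsOuterSeq r' d')
    (h0 : d' 0 = d 0) (h1 : d' 1 = d 1) : r' = r ∧ ∀ i ≤ r, d' i = d i := by
  have key : ∀ i, i ≤ r + 1 → i ≤ r' + 1 → d' i = d i := by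
    intro i
    induction i using Nat.strong_induction_on with
    | _ i ih =>
      match i with
      | 0 => intro _ _; exact h0
      | 1 => intro _ _; exact h1
      | (k + 2) =>
        intro hr hr'
        have e1 : d' k = d k := ih k (by omega) (by omega) (by omega)
        have e2 : d' (k + 1) = d (k + 1) := ih (k + 1) (by omega) (by omega) (by omega)
        have hc := (h.2.2 (k + 1) (by omega) (by omega)).1
        have hc' := (h'.2.2 (k + 1) (by omega) (by omega)).1
        simp only [Nat.add_sub_cancel] at hc hc'
        rw [e1, e2] at hc'
        have hlt : d (k + 2) < d (k + 1) := outer_next_lt h (k + 1) (by omega)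
        have hlt' : d' (k + 2) < d (k + 1) := by
          rw [← e2]; exact outer_next_lt h' (k + 1) (by omega)
        exact resid_unique hlt' hlt hc' hc
  have hrr : r' = r := by
    by_contra hne
    rcases Nat.lt_or_ge r' r with hlt | hge
    · have := key (r' + 1) (by omega) (by omega)
      rw [h'.2.1] at this
      have := h.1 (r' + 1) (by omega)
      omega
    · have hlt : r < r' := by omega
      have := key (r + 1) (by omega) (by omega)
      rw [h.2.1] at this
      have := h'.1 (r + 1) (by omega)
      omega
  exact ⟨hrr, fun i hi => key i (by omega) (by omega)⟩

lemma outer_exists : ∀ dd, 1 ≤ dd → ∀ m, dd < m →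
    ∃ r d, IsOuterSeq r d ∧ d 0 = m ∧ d 1 = dd := by
  intro dd
  induction dd using Nat.strong_induction_on with
  | _ dd ih =>
    intro h1 m hm
    by_cases hdvd : dd ∣ m
    · refine ⟨1, fun i => if i = 0 then m else if i = 1 then dd else 0, ?_, by norm_num, by norm_num⟩
      have h2dd : 2 * dd ≤ m := by
        rcases hdvd with ⟨k, rfl⟩
        have hk : 2 ≤ k := by
          by_contra hk
          interval_cases k <;> omega
        calc 2 * dd = dd * 2 := by ring
        _ ≤ dd * k := Nat.mul_le_mul_left dd hk
      refine ⟨?_, by norm_num, ?_⟩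
      · intro i hi
        interval_cases i <;> simp <;> omega
      · intro i hi1 hi2
        have : i = 1 := by omega
        subst this
        norm_num
        exact ⟨hdvd, h2dd⟩
    · set e := dd - m % dd with he
      have hmod : m % dd < dd := Nat.mod_lt _ (by omega)
      have hmodpos : 0 < m % dd := by
        rcases Nat.eq_zero_or_pos (m % dd) with h0 | h0
        · exact absurd (Nat.dvd_of_mod_eq_zero h0) hdvd
        · exact h0
      have he1 : 1 ≤ e := by omega
      have he2 : e < dd := by omega
      obtain ⟨r, d0, hseq, hd0, hd1⟩ := ih e he2 he1 dd he2
      obtain ⟨hpos, hz, hcond⟩ := hseq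
      have hmle : m % dd ≤ m := Nat.mod_le m dd
      obtain ⟨q, hq⟩ : dd ∣ m - m % dd := Nat.dvd_sub_mod m
      have hddvd : dd ∣ m + e := by
        refine ⟨q + 1, ?_⟩
        rw [Nat.mul_succ, ← hq]
        omega
      have hddle : dd ≤ m - m % dd := Nat.le_of_dvd (by omega) ⟨q, hq⟩
      refine ⟨r + 1, fun i => if i = 0 then m else d0 (i - 1), ?_, by norm_num, ?_⟩
      · refine ⟨?_, ?_, ?_⟩
        · intro i hi
          rcases Nat.eq_zero_or_pos i with h0 | h0
          · subst h0; simp; omega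
          · simp only [if_neg (by omega : ¬ i = 0)]
            exact hpos (i - 1) (by omega)
        · simp only [if_neg (by omega : ¬ r + 1 + 1 = 0)]
          simpa using hz
        · intro i hi1 hi2
          rcases Nat.lt_or_ge i 2 with h2 | h2
          · have : i = 1 := by omega
            subst this
            norm_num
            rw [hd0, hd1]
            exact ⟨hddvd, by omega⟩
          · obtain ⟨j, rfl⟩ : ∃ j, i = j + 2 := ⟨i - 2, by omega⟩
            simp only [if_neg (by omega : ¬ j + 2 = 0), if_neg (by omega : ¬ j + 2 - 1 = 0),
              if_neg (by omega : ¬ j + 2 + 1 = 0)]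
            have hc := hcond (j + 1) (by omega) (by omega)
            simpa using hc
      · simp [hd0]

/-- Outer sequences are strictly decreasing, end with `gcd (d 0) (d 1)`, and for any
`1 ≤ d < m` there is a unique outer sequence starting with `m, d`. -/
theorem outer_sequence_classification :
    (∀ r d, IsOuterSeq r d →
      (∀ i < r, d (i + 1) < d i) ∧ d r = Nat.gcd (d 0) (d 1)) ∧
    (∀ m dd : ℕ, 1 ≤ dd → dd < m →
      ∃ r d, IsOuterSeq r d ∧ d 0 = m ∧ d 1 = dd ∧
        ∀ r' d', IsOuterSeq r' d' → d' 0 = m → d' 1 = dd →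
          r' = r ∧ ∀ i ≤ r, d' i = d i) := by
  constructor
  · intro r d h
    refine ⟨outer_dec h, ?_⟩
    have := outer_gcd h r le_rfl
    rw [h.2.1] at this
    simpa using this
  · intro m dd h1 h2
    obtain ⟨r, d, hseq, h0, hd1⟩ := outer_exists dd h1 m h2
    refine ⟨r, d, hseq, h0, hd1, ?_⟩
    intro r' d' h' h'0 h'1
    exact outer_unique hseq h' (by rw [h'0, h0]) (by rw [h'1, hd1])
end

section
/- If n/d > n'/d' are fractions in lowest terms (d, d' > 0) with nd' - dn' > 1, then there exist coprime integers a, b with b > 0, n/d > a/b > n'/d', and b ≤ max(d, d'). -/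
/-- If `n/d > n'/d'` in lowest terms with `n d' - d n' > 1`, then there is a fraction
`a/b` strictly between them with `b ≤ max d d'`. -/
theorem exists_intermediate_fraction (n d n' d' : ℤ)
    (hd : 0 < d) (hd' : 0 < d')
    (h1 : IsCoprime n d) (h2 : IsCoprime n' d')
    (hlt : (n' : ℚ) / (d' : ℚ) < (n : ℚ) / (d : ℚ))
    (hdet : 1 < n * d' - d * n') :
    ∃ a b : ℤ, 0 < b ∧ IsCoprime a b ∧
      (n' : ℚ) / (d' : ℚ) < (a : ℚ) / (b : ℚ) ∧
      (a : ℚ) / (b : ℚ) < (n : ℚ) / (d : ℚ) ∧ b ≤ max d d' := by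
  obtain ⟨u, v, huv⟩ := h2
  set N := max d d' with hN
  have hdN : d ≤ N := le_max_left _ _
  have hd'N : d' ≤ N := le_max_right _ _
  set r := (N + u) % d' with hr
  have hr0 : 0 ≤ r := Int.emod_nonneg _ (ne_of_gt hd')
  have hr1 : r < d' := Int.emod_lt_of_pos _ hd'
  set b := N - r with hb
  have hbN : b ≤ N := by omega
  have hb_pos : 0 < b := by omega
  have hb_lb : N - d' < b := by omega
  set t := (N + u) / d' with ht
  have hbu : b + u = d' * t := by
    have h := Int.emod_add_mul_ediv (N + u) d'
    rw [← hr, ← ht] at h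
    linarith
  set a := v + t * n' with ha
  have key : a * d' - b * n' = 1 := by
    linear_combination huv - n' * hbu
  have identity : d = d' * (a * d - b * n) + b * (n * d' - d * n') := by
    linear_combination -d * key
  have hmain : 1 ≤ n * b - a * d := by
    by_contra hcon
    push_neg at hcon
    have h0 : 0 ≤ a * d - b * n := by nlinarith
    rcases eq_or_lt_of_le h0 with heq | hgt
    · -- a*d = b*n, so d ∣ b since gcd(n,d)=1
      have hdvd : d ∣ b := by
        have : d ∣ b * n := ⟨a, by linarith⟩
        exact (h1.symm).dvd_of_dvd_mul_right this
      obtain ⟨k, hk⟩ := hdvd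
      have hk1 : 1 ≤ k := by nlinarith
      have : d = b * (n * d' - d * n') := by
        linear_combination identity - d' * heq
      nlinarith
    · have hge1 : 1 ≤ a * d - b * n := hgt
      have h2' : d' * 1 ≤ d' * (a * d - b * n) :=
        mul_le_mul_of_nonneg_left hge1 hd'.le
      have h3' : b * 2 ≤ b * (n * d' - d * n') :=
        mul_le_mul_of_nonneg_left (by linarith) hb_pos.le
      linarith
  refine ⟨a, b, hb_pos, ⟨d', -n', by linear_combination key⟩, ?_, ?_, hbN⟩
  · rw [div_lt_div_iff₀ (by exact_mod_cast hd') (by exact_mod_cast hb_pos)]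
    have hint : n' * b < a * d' := by nlinarith
    exact_mod_cast hint
  · rw [div_lt_div_iff₀ (by exact_mod_cast hb_pos) (by exact_mod_cast hd)]
    have hint : a * d < n * b := by linarith
    exact_mod_cast hint
end

section
/- For any rationals n/d > n'/d' in lowest terms with positive denominators, there exists a unique shortest 1-path from n/d to n'/d'. -/
/-- A 1-path: a strictly decreasing sequence of fractions `n i / d i` in lowest terms,
with positive denominators and `n i * d (i+1) - d i * n (i+1) = 1` for `0 ≤ i ≤ r`. -/
def IsOnePath (r : ℕ) (n d : ℕ → ℤ) : Prop :=
  (∀ i ≤ r + 1, 0 < d i) ∧ (∀ i ≤ r + 1, IsCoprime (n i) (d i)) ∧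
  (∀ i ≤ r, (n (i + 1) : ℚ) / (d (i + 1) : ℚ) < (n i : ℚ) / (d i : ℚ)) ∧
  (∀ i ≤ r, n i * d (i + 1) - d i * n (i + 1) = 1)

/-- A 1-path is shortest if `d i ≠ d (i-1) + d (i+1)` for all `1 ≤ i ≤ r`. -/
def IsShortest (r : ℕ) (n d : ℕ → ℤ) : Prop :=
  ∀ i, 1 ≤ i → i ≤ r → d i ≠ d (i - 1) + d (i + 1)

lemma frac_lt {a b c d : ℤ} (hb : 0 < b) (hd : 0 < d) (h : c * b < a * d) :
    (c : ℚ) / d < (a : ℚ) / b := by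
  rw [div_lt_div_iff₀ (by exact_mod_cast hd) (by exact_mod_cast hb)]
  exact_mod_cast h

/-- the "a-relation" : consecutive triple in a 1-path satisfies
    `v_{i-1} + v_{i+1} = a * v_i`. -/
lemma arel {n0 d0 n1 d1 n2 d2 : ℤ} (hd1 : d1 ≠ 0) (hc : IsCoprime n1 d1)
    (h01 : n0 * d1 - d0 * n1 = 1) (h12 : n1 * d2 - d1 * n2 = 1) :
    ∃ a : ℤ, n0 + n2 = a * n1 ∧ d0 + d2 = a * d1 := by
  have h : n1 * (d0 + d2) = d1 * (n0 + n2) := by ring_nf; nlinarith [h01, h12]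
  have hdvd : d1 ∣ d0 + d2 := by
    have : d1 ∣ n1 * (d0 + d2) := ⟨n0 + n2, h⟩
    exact (hc.symm.dvd_of_dvd_mul_left this)
  obtain ⟨a, ha⟩ := hdvd
  refine ⟨a, ?_, by rw [ha, mul_comm]⟩
  have h2 : d1 * (a * n1) = d1 * (n0 + n2) := by rw [← h, ha]; ring
  exact (mul_left_cancel₀ hd1 h2).symm

/-- Key invariant: along a shortest 1-path, `K i = n i * d(r+1) - d i * n(r+1)` is
strictly decreasing and positive up to index `r`. -/
lemma key {r : ℕ} {n d : ℕ → ℤ} (h : IsOnePath r n d) (hs : IsShortest r n d) :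
    (∀ i ≤ r, n (i+1) * d (r+1) - d (i+1) * n (r+1)
        < n i * d (r+1) - d i * n (r+1)) ∧
    (∀ i ≤ r, 1 ≤ n i * d (r+1) - d i * n (r+1)) := by
  obtain ⟨hpos, hcop, -, hdet⟩ := h
  set K : ℕ → ℤ := fun i => n i * d (r+1) - d i * n (r+1) with hK
  have main : ∀ j i, i + j = r → K (i+1) < K i ∧ 1 ≤ K i := by
    intro j
    induction j with
    | zero =>
      intro i hi
      have hir : i = r := by omega
      subst hir
      have h1 : K i = 1 := hdet i le_rfl
      have h0 : K (i+1) = 0 := by simp [hK]; ring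
      constructor <;> omega
    | succ j ih =>
      intro i hi
      obtain ⟨ih1, ih2⟩ := ih (i+1) (by omega)
      -- a-relation at index i+1
      obtain ⟨a, han, had⟩ := arel (d0 := d i) (n0 := n i) (d2 := d (i+2)) (n2 := n (i+2))
        (ne_of_gt (hpos (i+1) (by omega))) (hcop (i+1) (by omega))
        (hdet i (by omega)) (hdet (i+1) (by omega))
      have hd0 : 0 < d i := hpos i (by omega)
      have hd1 : 0 < d (i+1) := hpos (i+1) (by omega)
      have hd2 : 0 < d (i+2) := hpos (i+2) (by omega)
      have ha1 : 1 ≤ a := by nlinarith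
      have hane : a ≠ 1 := by
        intro h1
        exact hs (i+1) (by omega) (by omega) (by simpa [h1] using had.symm)
      have ha2 : 2 ≤ a := by omega
      have hrel : K i + K (i+2) = a * K (i+1) := by
        simp only [hK]
        have : (n i + n (i+2)) * d (r+1) - (d i + d (i+2)) * n (r+1)
            = a * (n (i+1) * d (r+1) - d (i+1) * n (r+1)) := by
          rw [han, had]; ring
        linarith [this]
      constructor
      · nlinarith
      · nlinarith
  constructor
  · intro i hi; exact (main (r - i) i (by omega)).1
  · intro i hi; exact (main (r - i) i (by omega)).2

/-- shifting a shortest 1-path by one. -/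
lemma shift {r : ℕ} {n d : ℕ → ℤ} (hr : 1 ≤ r) (h : IsOnePath r n d)
    (hs : IsShortest r n d) :
    IsOnePath (r-1) (fun i => n (i+1)) (fun i => d (i+1)) ∧
    IsShortest (r-1) (fun i => n (i+1)) (fun i => d (i+1)) := by
  obtain ⟨hpos, hcop, hlt, hdet⟩ := h
  refine ⟨⟨fun i hi => hpos (i+1) (by omega), fun i hi => hcop (i+1) (by omega),
    fun i hi => hlt (i+1) (by omega), fun i hi => hdet (i+1) (by omega)⟩, ?_⟩
  intro i h1 h2
  have := hs (i+1) (by omega) (by omega)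
  simpa [Nat.add_sub_cancel, show i + 1 - 1 = i - 1 + 1 by omega] using this

/-- Uniqueness of shortest 1-paths with fixed endpoints. -/
lemma uniq : ∀ k : ℕ, ∀ r n d r' n' d', IsOnePath r n d → IsShortest r n d →
    IsOnePath r' n' d' → IsShortest r' n' d' →
    n 0 = n' 0 → d 0 = d' 0 → n (r+1) = n' (r'+1) → d (r+1) = d' (r'+1) →
    n 0 * d (r+1) - d 0 * n (r+1) = (k : ℤ) →
    r = r' ∧ ∀ i ≤ r + 1, n i = n' i ∧ d i = d' i := by
  intro k
  induction k using Nat.strong_induction_on with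
  | _ k ih =>
    intro r n d r' n' d' hp hs hp' hs' e0n e0d e1n e1d hk
    obtain ⟨kdec, kpos⟩ := key hp hs
    obtain ⟨kdec', kpos'⟩ := key hp' hs'
    have hk' : n' 0 * d' (r'+1) - d' 0 * n' (r'+1) = (k : ℤ) := by
      rw [← e0n, ← e0d, ← e1n, ← e1d]; exact hk
    have hk1 : 1 ≤ (k : ℤ) := by
      have := kpos 0 (by omega); omega
    by_cases hr : r = 0
    · -- then k = 1 and r' = 0
      subst hr
      have hk1' : (k : ℤ) = 1 := by
        have := (⟨fun i hi => (hp.1 i hi), hp.2⟩ : IsOnePath 0 n d)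
        have := hp.2.2.2 0 le_rfl
        omega
      have hr' : r' = 0 := by
        by_contra hr'
        have h1 := kdec' 0 (by omega)
        have h2 := kpos' 1 (by omega)
        simp only [Nat.zero_add] at h1
        omega
      subst hr'
      refine ⟨rfl, fun i hi => ?_⟩
      interval_cases i
      · exact ⟨e0n, e0d⟩
      · exact ⟨e1n, e1d⟩
    · -- r ≥ 1, so k ≥ 2, hence r' ≥ 1
      have hrr : 1 ≤ r := by omega
      have hk2 : 2 ≤ (k : ℤ) := by
        have h1 := kdec 0 (by omega)
        have h2 := kpos 1 (by omega)
        simp only [Nat.zero_add] at h1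
        omega
      have hr' : 1 ≤ r' := by
        by_contra hcon
        have : r' = 0 := by omega
        subst this
        have := hp'.2.2.2 0 le_rfl
        omega
      -- v_1 = v'_1
      have hdet0 : n 0 * d 1 - d 0 * n 1 = 1 := hp.2.2.2 0 (by omega)
      have hdet0' : n 0 * d' 1 - d 0 * n' 1 = 1 := by
        rw [e0n, e0d]; exact hp'.2.2.2 0 (by omega)
      have hdiff : n 0 * (d 1 - d' 1) = d 0 * (n 1 - n' 1) := by ring_nf; nlinarith [hdet0, hdet0']
      have hdvd : d 0 ∣ d 1 - d' 1 := by
        have h1 : d 0 ∣ n 0 * (d 1 - d' 1) := ⟨n 1 - n' 1, hdiff⟩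
        exact (hp.2.1 0 (by omega)).symm.dvd_of_dvd_mul_left h1
      obtain ⟨t, ht⟩ := hdvd
      have hd0 : 0 < d 0 := hp.1 0 (by omega)
      have htn : n 1 - n' 1 = t * n 0 := by
        have h2 : d 0 * (t * n 0) = d 0 * (n 1 - n' 1) := by
          rw [← hdiff, ht]; ring
        exact (mul_left_cancel₀ (ne_of_gt hd0) h2).symm
      have hK1 : 1 ≤ n 1 * d (r+1) - d 1 * n (r+1) := kpos 1 hrr
      have hK1u : n 1 * d (r+1) - d 1 * n (r+1) < (k : ℤ) := by
        have h1 := kdec 0 (by omega)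
        simp only [Nat.zero_add] at h1
        omega
      have hK1' : 1 ≤ n' 1 * d (r+1) - d' 1 * n (r+1) := by
        rw [e1n, e1d]; exact kpos' 1 hr'
      have hK1u' : n' 1 * d (r+1) - d' 1 * n (r+1) < (k : ℤ) := by
        rw [e1n, e1d]
        have h1 := kdec' 0 (by omega)
        simp only [Nat.zero_add] at h1
        omega
      have hKdiff : (n 1 * d (r+1) - d 1 * n (r+1)) - (n' 1 * d (r+1) - d' 1 * n (r+1))
          = t * (k : ℤ) := by
        rw [← hk]
        have hn : n 1 = n' 1 + t * n 0 := by linarith [htn]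
        have hd : d 1 = d' 1 + t * d 0 := by linarith [ht]
        rw [hn, hd]; ring
      have ht0 : t = 0 := by
        have hb : t * (k : ℤ) < (k : ℤ) := by omega
        have hb2 : -(k : ℤ) < t * (k : ℤ) := by omega
        rcases lt_trichotomy t 0 with h | h | h
        · exfalso
          have h2 : t * (k:ℤ) ≤ -1 * (k:ℤ) :=
            mul_le_mul_of_nonneg_right (by omega) (by omega)
          linarith
        · exact h
        · exfalso
          have h2 : 1 * (k:ℤ) ≤ t * (k:ℤ) :=
            mul_le_mul_of_nonneg_right (by omega) (by omega)
          linarith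
      have en1 : n 1 = n' 1 := by rw [ht0, zero_mul] at htn; omega
      have ed1 : d 1 = d' 1 := by rw [ht0, mul_zero] at ht; omega
      -- apply IH to shifted paths
      obtain ⟨hps, hss⟩ := shift hrr hp hs
      obtain ⟨hps', hss'⟩ := shift hr' hp' hs'
      set K1 : ℤ := n 1 * d (r+1) - d 1 * n (r+1) with hK1def
      have hK1nat : K1 = ((K1.toNat : ℕ) : ℤ) := (Int.toNat_of_nonneg (by omega)).symm
      have hlt : K1.toNat < k := by omega
      have hsucc : r - 1 + 1 = r := by omega
      have hsucc' : r' - 1 + 1 = r' := by omega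
      have hgoal : n 1 * d (r+1) - d 1 * n (r+1) = ((K1.toNat : ℕ) : ℤ) := by
        rw [← hK1nat]
      obtain ⟨hreq, hall⟩ := ih K1.toNat hlt (r-1) (fun i => n (i+1)) (fun i => d (i+1))
        (r'-1) (fun i => n' (i+1)) (fun i => d' (i+1)) hps hss hps' hss'
        (by simpa using en1) (by simpa using ed1)
        (by simp only [hsucc, hsucc']; exact e1n)
        (by simp only [hsucc, hsucc']; exact e1d)
        (by simp only [Nat.zero_add, hsucc]; exact hgoal)
      refine ⟨by omega, fun i hi => ?_⟩
      rcases Nat.eq_zero_or_pos i with h | h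
      · subst h; exact ⟨e0n, e0d⟩
      · have := hall (i-1) (by omega)
        simp only [show i - 1 + 1 = i by omega] at this
        exact this

/-- Existence of a shortest 1-path. -/
lemma exists_shortest : ∀ k : ℕ, ∀ N D N' D' : ℤ, 1 ≤ k → 0 < D → 0 < D' →
    IsCoprime N D → IsCoprime N' D' → N * D' - D * N' = (k : ℤ) →
    ∃ r n d, IsOnePath r n d ∧ IsShortest r n d ∧
      n 0 = N ∧ d 0 = D ∧ n (r+1) = N' ∧ d (r+1) = D' := by
  intro k
  induction k using Nat.strong_induction_on with
  | _ k ih =>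
    intro N D N' D' hk1 hD hD' hc hc' hk
    by_cases hk2 : (k : ℤ) = 1
    · -- direct edge
      refine ⟨0, fun i => if i = 0 then N else N', fun i => if i = 0 then D else D',
        ⟨?_, ?_, ?_, ?_⟩, ?_, by simp, by simp, by simp, by simp⟩
      · intro i hi; interval_cases i <;> simp [hD, hD']
      · intro i hi; interval_cases i <;> simp [hc, hc']
      · intro i hi; interval_cases i
        norm_num
        exact frac_lt hD hD' (by nlinarith [hk])
      · intro i hi; interval_cases i; norm_num; nlinarith [hk]
      · intro i h1 h2; omega
    · -- k ≥ 2 : construct the first step and recurse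
      have hkpos : (0:ℤ) < (k:ℤ) := by exact_mod_cast hk1
      have hk2' : 2 ≤ (k:ℤ) := by
        rcases lt_or_eq_of_le (show (1:ℤ) ≤ (k:ℤ) by exact_mod_cast hk1) with h | h
        · omega
        · exact absurd h.symm hk2
      obtain ⟨u, v, huv⟩ := id hc
      set p : ℤ := -v with hpdef
      set q : ℤ := u with hqdef
      have hpq : N * q - D * p = 1 := by rw [hpdef, hqdef]; linear_combination huv
      set c : ℤ := p * D' - q * N' with hcdef
      set t : ℤ := -(c / (k:ℤ)) with htdef
      set k1 : ℤ := c % (k:ℤ) with hk1def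
      set n1 : ℤ := p + t * N with hn1def
      set d1 : ℤ := q + t * D with hd1def
      have hdet1 : N * d1 - D * n1 = 1 := by
        rw [hn1def, hd1def]; linear_combination hpq
      have hdet2 : n1 * D' - d1 * N' = k1 := by
        have h2 : n1 * D' - d1 * N' = c + t * (N * D' - D * N') := by
          rw [hn1def, hd1def, hcdef]; ring
        rw [hk] at h2
        rw [h2, hk1def, htdef, Int.emod_def]; ring
      have hk1nn : 0 ≤ k1 := Int.emod_nonneg c (ne_of_gt hkpos)
      have hk1lt : k1 < (k:ℤ) := Int.emod_lt_of_pos c hkpos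
      have hcop1 : IsCoprime n1 d1 := ⟨-D, N, by linarith [hdet1]⟩
      have hD'ne : D' ≠ 0 := ne_of_gt hD'
      have hk1pos : 1 ≤ k1 := by
        rcases lt_or_eq_of_le hk1nn with h | h
        · omega
        · exfalso
          have hz : n1 * D' = d1 * N' := by linarith [hdet2]
          have hdvd1 : d1 ∣ D' := by
            have h5 : d1 ∣ n1 * D' := ⟨N', by linarith [hz]⟩
            exact hcop1.symm.dvd_of_dvd_mul_left h5
          have hdvd2 : D' ∣ d1 := by
            have h5 : D' ∣ N' * d1 := ⟨n1, by linarith [hz]⟩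
            exact hc'.symm.dvd_of_dvd_mul_left h5
          obtain ⟨w, hw⟩ := hdvd2
          obtain ⟨w', hw'⟩ := hdvd1
          rw [hw] at hw'
          have h6 : D' * (w * w') = D' * 1 := by linear_combination -hw'
          have hww : w * w' = 1 := mul_left_cancel₀ hD'ne h6
          rcases Int.mul_eq_one_iff_eq_one_or_neg_one.mp hww with ⟨hw1, -⟩ | ⟨hw1, -⟩
          · have hd1D : d1 = D' := by rw [hw, hw1, mul_one]
            have hn1N : n1 = N' := by
              apply mul_right_cancel₀ hD'ne
              rw [hd1D] at hz; linarith [hz]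
            rw [hd1D, hn1N, hk] at hdet1
            omega
          · have hd1D : d1 = -D' := by rw [hw, hw1]; ring
            have hn1N : n1 = -N' := by
              apply mul_right_cancel₀ hD'ne
              rw [hd1D] at hz; linarith [hz]
            rw [hd1D, hn1N] at hdet1
            have : -(N * D' - D * N') = 1 := by linarith [hdet1]
            rw [hk] at this
            omega
      have hmul : (k:ℤ) * d1 = k1 * D + D' := by
        linear_combination D' * hdet1 + D * hdet2 - d1 * hk
      have hd1pos : 0 < d1 := by
        by_contra hcon
        push_neg at hcon
        have h1 : (k:ℤ) * d1 ≤ (k:ℤ) * 0 := mul_le_mul_of_nonneg_left hcon hkpos.le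
        rw [mul_zero] at h1
        have h2 : 0 ≤ k1 * D := mul_nonneg hk1nn hD.le
        linarith [hmul]
      have hltk : k1.toNat < k := by omega
      obtain ⟨r0, n0, d0, hp0, hs0, g0n, g0d, g1n, g1d⟩ :=
        ih k1.toNat hltk n1 d1 N' D' (by omega) hd1pos hD' hcop1 hc'
          (by rw [hdet2, Int.toNat_of_nonneg hk1nn])
      obtain ⟨kdec0, kpos0⟩ := key hp0 hs0
      obtain ⟨hpos0, hcop0, hlt0, hdet0⟩ := hp0
      set nn : ℕ → ℤ := fun i => if i = 0 then N else n0 (i-1) with hnn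
      set dd : ℕ → ℤ := fun i => if i = 0 then D else d0 (i-1) with hdd
      have nn0 : nn 0 = N := by simp [hnn]
      have dd0 : dd 0 = D := by simp [hdd]
      have nnE : ∀ x : ℕ, x ≠ 0 → nn x = n0 (x-1) := by
        intro x hx; simp [hnn, hx]
      have ddE : ∀ x : ℕ, x ≠ 0 → dd x = d0 (x-1) := by
        intro x hx; simp [hdd, hx]
      have hposC : ∀ i ≤ r0 + 1 + 1, 0 < dd i := by
        intro i hi
        rcases Nat.eq_zero_or_pos i with h | h
        · rw [h, dd0]; exact hD
        · rw [ddE i (by omega)]; exact hpos0 (i-1) (by omega)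
      have hdetC : ∀ i ≤ r0 + 1, nn i * dd (i+1) - dd i * nn (i+1) = 1 := by
        intro i hi
        rcases Nat.eq_zero_or_pos i with h | h
        · rw [h, nn0, dd0, nnE 1 (by omega), ddE 1 (by omega)]
          show N * d0 0 - D * n0 0 = 1
          rw [g0n, g0d]; exact hdet1
        · rw [nnE i (by omega), ddE i (by omega), nnE (i+1) (by omega),
            ddE (i+1) (by omega)]
          have h7 := hdet0 (i-1) (by omega)
          rw [show i-1+1 = i+1-1 by omega] at h7
          exact h7
      refine ⟨r0 + 1, nn, dd, ⟨hposC, ?_, ?_, hdetC⟩, ?_, nn0, dd0, ?_, ?_⟩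
      · -- coprimality
        intro i hi
        rcases Nat.eq_zero_or_pos i with h | h
        · rw [h, nn0, dd0]; exact hc
        · rw [nnE i (by omega), ddE i (by omega)]
          exact hcop0 (i-1) (by omega)
      · -- strict decrease
        intro i hi
        refine frac_lt (hposC i (by omega)) (hposC (i+1) (by omega)) ?_
        have h7 := hdetC i hi
        nlinarith [h7]
      · -- shortest
        intro i h1 h2
        rcases Nat.lt_or_ge i 2 with h | h
        · -- i = 1 : the junction
          have hi1 : i = 1 := by omega
          subst hi1
          rw [ddE 1 (by omega), dd0, ddE 2 (by omega)]
          show d0 0 ≠ D + d0 1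
          intro heq
          rw [g0d] at heq
          have h12 : n1 * d0 1 - d1 * n0 1 = 1 := by
            have h8 := hdet0 0 (by omega)
            rw [g0n, g0d] at h8
            exact h8
          have hrel : n1 * (D + d0 1) - d1 * (N + n0 1) = 0 := by
            linear_combination h12 - hdet1
          have h3 : d1 * (n1 - (N + n0 1)) = 0 := by
            linear_combination hrel + n1 * heq
          have hsum : n1 = N + n0 1 := by
            have h4 := (mul_eq_zero.mp h3).resolve_left (ne_of_gt hd1pos)
            linarith [h4]
          have hKK : 0 ≤ n0 1 * D' - d0 1 * N' := by
            rcases Nat.eq_zero_or_pos r0 with h9 | h9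
            · have e1 : n0 1 = N' := by rw [← g1n, h9]
              have e2 : d0 1 = D' := by rw [← g1d, h9]
              rw [e1, e2]
              have : N' * D' = D' * N' := mul_comm _ _
              omega
            · have h10 := kpos0 1 h9
              rw [g1n, g1d] at h10
              omega
          have hcontr : k1 = (k:ℤ) + (n0 1 * D' - d0 1 * N') := by
            rw [← hdet2, hsum, heq, ← hk]; ring
          linarith [hk1lt, hKK, hcontr]
        · -- i ≥ 2 : inherited from the inner path
          rw [ddE i (by omega), ddE (i-1) (by omega), ddE (i+1) (by omega)]
          have h11 := hs0 (i-1) (by omega) (by omega)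
          rw [show i-1+1 = i+1-1 by omega] at h11
          exact h11
      · rw [nnE (r0+1+1) (by omega), show r0+1+1-1 = r0+1 by omega]; exact g1n
      · rw [ddE (r0+1+1) (by omega), show r0+1+1-1 = r0+1 by omega]; exact g1d

/-- Existence and uniqueness of the shortest 1-path between two fractions. -/
theorem shortest_one_path_exists_unique (N D N' D' : ℤ)
    (hD : 0 < D) (hD' : 0 < D')
    (hc : IsCoprime N D) (hc' : IsCoprime N' D')
    (hlt : (N' : ℚ) / (D' : ℚ) < (N : ℚ) / (D : ℚ)) :
    ∃ r n d, IsOnePath r n d ∧ IsShortest r n d ∧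
      n 0 = N ∧ d 0 = D ∧ n (r + 1) = N' ∧ d (r + 1) = D' ∧
      ∀ r' n' d', IsOnePath r' n' d' → IsShortest r' n' d' →
        n' 0 = N → d' 0 = D → n' (r' + 1) = N' → d' (r' + 1) = D' →
        r' = r ∧ ∀ i ≤ r + 1, n' i = n i ∧ d' i = d i := by
  have hk0 : 1 ≤ N * D' - D * N' := by
    rw [div_lt_div_iff₀ (by exact_mod_cast hD') (by exact_mod_cast hD)] at hlt
    have : N' * D < N * D' := by exact_mod_cast hlt
    nlinarith
  set k : ℕ := (N * D' - D * N').toNat with hkdef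
  have hkz : N * D' - D * N' = (k : ℤ) := by rw [hkdef]; omega
  obtain ⟨r, n, d, hp, hs, h0n, h0d, h1n, h1d⟩ :=
    exists_shortest k N D N' D' (by omega) hD hD' hc hc' hkz
  refine ⟨r, n, d, hp, hs, h0n, h0d, h1n, h1d, ?_⟩
  intro r' n' d' hp' hs' h0n' h0d' h1n' h1d'
  have := uniq k r' n' d' r n d hp' hs' hp hs
    (by rw [h0n', h0n]) (by rw [h0d', h0d]) (by rw [h1n', h1n]) (by rw [h1d', h1d])
    (by rw [h0n', h0d', h1n', h1d']; exact hkz)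
  obtain ⟨hreq, hall⟩ := this
  exact ⟨hreq, fun i hi => hall i (by omega)⟩
end

section
/- The denominators d_0, d_1, ..., d_{r+1} of a shortest 1-path form an inner sequence of gcd 1: for each 1 ≤ i ≤ r, (d_{i-1}+d_{i+1})/d_i is an integer ≥ 2, and gcd(d_0, d_1) = 1. -/
/-- The denominators of a shortest 1-path form an inner sequence of gcd 1. -/
theorem shortest_one_path_denominators (r : ℕ) (n d : ℕ → ℤ)
    (hpath : IsOnePath r n d) (hshort : IsShortest r n d) :
    (∀ i, 1 ≤ i → i ≤ r →
      d i ∣ d (i - 1) + d (i + 1) ∧ 2 * d i ≤ d (i - 1) + d (i + 1)) ∧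
    Int.gcd (d 0) (d 1) = 1 := by
  obtain ⟨hd, hcop, _, heq⟩ := hpath
  constructor
  · intro i h1 hi
    have hi1 : i - 1 + 1 = i := Nat.sub_add_cancel h1
    have e1 : n (i - 1) * d i - d (i - 1) * n i = 1 := by
      have := heq (i - 1) (by omega); rwa [hi1] at this
    have e2 : n i * d (i + 1) - d i * n (i + 1) = 1 := heq i hi
    have key : n i * (d (i - 1) + d (i + 1)) = d i * (n (i - 1) + n (i + 1)) := by linear_combination e2 - e1
    have hdvd : d i ∣ d (i - 1) + d (i + 1) := by
      have hc : IsCoprime (d i) (n i) := (hcop i (by omega)).symm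
      refine hc.dvd_of_dvd_mul_right ?_
      exact ⟨n (i - 1) + n (i + 1), by linarith [key]⟩
    refine ⟨hdvd, ?_⟩
    obtain ⟨k, hk⟩ := hdvd
    have hb : 0 < d i := hd i (by omega)
    have ha : 0 < d (i - 1) := hd (i - 1) (by omega)
    have hc' : 0 < d (i + 1) := hd (i + 1) (by omega)
    have hkpos : 0 < k := by nlinarith
    have hk2 : 2 ≤ k := by
      rcases lt_or_ge k 2 with h | h
      · interval_cases k
        · exact absurd (hshort i h1 hi (by linarith)) (fun h => h)
      · exact h
    calc 2 * d i ≤ d i * k := by nlinarith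
      _ = d (i - 1) + d (i + 1) := hk.symm
  · have e : n 0 * d 1 - d 0 * n 1 = 1 := heq 0 (Nat.zero_le r)
    have : IsCoprime (d 0) (d 1) := ⟨-n 1, n 0, by linarith⟩
    exact Int.isCoprime_iff_gcd_eq_one.mp this
end

section
/- Every fraction a/b in lowest terms contained in the closed interval [n'/d', n/d] whose denominator b is minimal among denominators of fractions in that interval is a member of the shortest 1-path from n/d to n'/d'. -/
theorem farey_between' {nb db nc dc a b : ℤ} (hdb : 0 < db) (hdc : 0 < dc) (hb : 0 < b)
    (hdet : nb * dc - db * nc = 1)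
    (h1 : (nc : ℚ)/(dc:ℚ) < (a:ℚ)/(b:ℚ)) (h2 : (a:ℚ)/(b:ℚ) < (nb:ℚ)/(db:ℚ)) :
    db + dc ≤ b := by
  rw [div_lt_div_iff₀ (by exact_mod_cast hdc) (by exact_mod_cast hb)] at h1
  rw [div_lt_div_iff₀ (by exact_mod_cast hb) (by exact_mod_cast hdb)] at h2
  have h1' : nc * b < a * dc := by exact_mod_cast h1
  have h2' : a * db < nb * b := by exact_mod_cast h2
  have hX : 1 ≤ nb * b - db * a := by linarith
  have hY : 1 ≤ a * dc - b * nc := by linarith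
  have key : b = dc * (nb * b - db * a) + db * (a * dc - b * nc) := by
    have : b * (nb * dc - db * nc) = dc * (nb * b - db * a) + db * (a * dc - b * nc) := by ring
    rw [hdet] at this; linarith
  nlinarith [mul_le_mul_of_nonneg_left hX hdc.le, mul_le_mul_of_nonneg_left hY hdb.le]

theorem frac_eq' {nn dd a b : ℤ} (hdd : 0 < dd) (hb : 0 < b)
    (hc : IsCoprime nn dd) (hab : IsCoprime a b)
    (h : (a:ℚ)/(b:ℚ) = (nn:ℚ)/(dd:ℚ)) : nn = a ∧ dd = b := by
  have hbQ : (0:ℚ) < (b:ℚ) := by exact_mod_cast hb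
  have hddQ : (0:ℚ) < (dd:ℚ) := by exact_mod_cast hdd
  rw [div_eq_div_iff hbQ.ne' hddQ.ne'] at h
  have h' : a * dd = nn * b := by exact_mod_cast h
  have hbd : b ∣ dd := by
    have : b ∣ a * dd := h' ▸ dvd_mul_left b nn
    exact hab.symm.dvd_of_dvd_mul_left this
  have hdb : dd ∣ b := by
    have : dd ∣ nn * b := h' ▸ dvd_mul_left dd a
    exact hc.symm.dvd_of_dvd_mul_left this
  have heq : dd = b := Int.dvd_antisymm hdd.le hb.le hdb hbd
  refine ⟨?_, heq⟩
  rw [heq] at h'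
  exact (mul_right_cancel₀ hb.ne' h').symm

/-- Any fraction of minimal denominator in the interval `[N'/D', N/D]` occurs on the
shortest 1-path from `N/D` to `N'/D'`. -/
theorem minimal_denominator_mem_shortest_path (N D N' D' a b : ℤ)
    (hD : 0 < D) (hD' : 0 < D')
    (hc : IsCoprime N D) (hc' : IsCoprime N' D')
    (hb : 0 < b) (hab : IsCoprime a b)
    (hmem₁ : (N' : ℚ) / (D' : ℚ) ≤ (a : ℚ) / (b : ℚ))
    (hmem₂ : (a : ℚ) / (b : ℚ) ≤ (N : ℚ) / (D : ℚ))
    (hmin : ∀ a' b' : ℤ, 0 < b' → IsCoprime a' b' →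
      (N' : ℚ) / (D' : ℚ) ≤ (a' : ℚ) / (b' : ℚ) →
      (a' : ℚ) / (b' : ℚ) ≤ (N : ℚ) / (D : ℚ) → b ≤ b')
    (r : ℕ) (n d : ℕ → ℤ)
    (hpath : IsOnePath r n d) (hshort : IsShortest r n d)
    (h0 : n 0 = N) (h0' : d 0 = D) (h1 : n (r + 1) = N') (h1' : d (r + 1) = D') :
    ∃ i ≤ r + 1, n i = a ∧ d i = b := by
  obtain ⟨hpos, hcop, hdec, hdet⟩ := hpath
  set q : ℕ → ℚ := fun i => (n i : ℚ) / (d i : ℚ) with hq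
  -- upper bound: q j ≤ q 0 = N/D
  have upper : ∀ j ≤ r + 1, q j ≤ (N:ℚ)/(D:ℚ) := by
    intro j hj
    induction j with
    | zero => simp [hq, h0, h0']
    | succ k ih =>
      have hk : k ≤ r := by omega
      have := hdec k hk
      have := ih (by omega)
      exact le_of_lt (lt_of_lt_of_le (by exact hdec k hk) this)
  -- lower bound: q (r+1) ≤ q j
  have lowaux : ∀ k, k ≤ r + 1 → q (r + 1) ≤ q (r + 1 - k) := by
    intro k hk
    induction k with
    | zero => simp
    | succ m ih =>
      have h1m : r + 1 - (m + 1) = (r - m) := by omega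
      have h2m : r + 1 - m = (r - m) + 1 := by omega
      have hrm : r - m ≤ r := by omega
      have := hdec (r - m) hrm
      have ihm := ih (by omega)
      rw [h2m] at ihm
      rw [h1m]
      exact le_of_lt (lt_of_le_of_lt ihm this)
  have lower : ∀ j ≤ r + 1, (N':ℚ)/(D':ℚ) ≤ q j := by
    intro j hj
    have := lowaux (r + 1 - j) (by omega)
    have hj' : r + 1 - (r + 1 - j) = j := by omega
    rw [hj'] at this
    calc (N':ℚ)/(D':ℚ) = q (r+1) := by simp [hq, h1, h1']
      _ ≤ q j := this
  -- minimality gives b ≤ d j for all j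
  have bmin : ∀ j ≤ r + 1, b ≤ d j := fun j hj =>
    hmin (n j) (d j) (hpos j hj) (hcop j hj) (lower j hj) (upper j hj)
  by_contra hcon
  push_neg at hcon
  have neq : ∀ i ≤ r + 1, (a:ℚ)/(b:ℚ) ≠ q i := by
    intro i hi h
    obtain ⟨ha, hd⟩ := frac_eq' (hpos i hi) hb (hcop i hi) hab h
    exact (hcon i hi ha) hd
  have main : ∀ i ≤ r + 1, (a:ℚ)/(b:ℚ) < q i := by
    intro i hi
    induction i with
    | zero =>
      refine lt_of_le_of_ne ?_ (neq 0 (by omega))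
      simpa [hq, h0, h0'] using hmem₂
    | succ k ih =>
      have hk : k ≤ r := by omega
      have hlt : (a:ℚ)/(b:ℚ) < q k := ih (by omega)
      rcases lt_trichotomy ((a:ℚ)/(b:ℚ)) (q (k+1)) with h | h | h
      · exact h
      · exact absurd h (neq (k+1) hi)
      · exfalso
        have hsum : d k + d (k+1) ≤ b :=
          farey_between' (hpos k (by omega)) (hpos (k+1) (by omega)) hb (hdet k hk) h hlt
        have := bmin k (by omega)
        have := bmin (k+1) (by omega)
        omega
  have := main (r+1) le_rfl
  rw [hq] at this
  simp only [h1, h1'] at this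
  exact absurd hmem₁ (not_le.mpr this)
end

section
/- The Euler characteristic of a core Ψ = m^{o_1,...,o_k} is an even integer, i.e., χ(Ψ) = m(2-k) + Σ_i gcd(m, o_i) is even. -/
/-- A core `m^{o_1,...,o_k}`: `m ≥ 1` and residues `o i` with representatives in
`{1,...,m-1}`, summing to `0` mod `m`, and with `gcd(m, o_1, ..., o_k) = 1`. -/
def IsCore (m k : ℕ) (o : Fin k → ℕ) : Prop :=
  1 ≤ m ∧ (∀ i, 1 ≤ o i ∧ o i < m) ∧ (∑ i, o i) % m = 0 ∧
    Nat.gcd m (Finset.univ.gcd o) = 1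

/-- The Euler characteristic `χ(Ψ) = m(2-k) + Σ_i gcd(m, o_i)` of a core. -/
def coreChi (m k : ℕ) (o : Fin k → ℕ) : ℤ :=
  (m : ℤ) * (2 - (k : ℤ)) + ∑ i, (Nat.gcd m (o i) : ℤ)

lemma zmod2_cast_eq_zero_iff (n : ℕ) : (n : ZMod 2) = 0 ↔ 2 ∣ n :=
  ZMod.natCast_eq_zero_iff n 2

lemma zmod2_cast_odd {n : ℕ} (h : ¬ 2 ∣ n) : (n : ZMod 2) = 1 := by
  have h2 : n % 2 = 1 := Nat.two_dvd_ne_zero.mp h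
  have : ((n % 2 : ℕ) : ZMod 2) = (n : ZMod 2) := ZMod.natCast_mod n 2
  rw [← this, h2]; simp

/-- The Euler characteristic of a core is even. -/
theorem coreChi_even (m k : ℕ) (o : Fin k → ℕ) (h : IsCore m k o) :
    Even (coreChi m k o) := by
  obtain ⟨hm, ho, hsum, -⟩ := h
  suffices hz : ((coreChi m k o : ℤ) : ZMod 2) = 0 by
    have := (ZMod.intCast_zmod_eq_zero_iff_dvd (coreChi m k o) 2).mp hz
    rw [even_iff_two_dvd]
    exact_mod_cast this
  unfold coreChi
  push_cast
  have h2 : (2 : ZMod 2) = 0 := by decide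
  by_cases hme : 2 ∣ m
  · -- m even: each gcd has the parity of o_i, and Σ o_i is even
    have hmz : (m : ZMod 2) = 0 := (zmod2_cast_eq_zero_iff m).mpr hme
    have hg : ∀ i, ((Nat.gcd m (o i) : ℕ) : ZMod 2) = ((o i : ℕ) : ZMod 2) := by
      intro i
      by_cases hoi : 2 ∣ o i
      · rw [(zmod2_cast_eq_zero_iff _).mpr (Nat.dvd_gcd hme hoi),
          (zmod2_cast_eq_zero_iff _).mpr hoi]
      · have : ¬ 2 ∣ Nat.gcd m (o i) := fun hd => hoi (hd.trans (Nat.gcd_dvd_right _ _))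
        rw [zmod2_cast_odd this, zmod2_cast_odd hoi]
    have hsum2 : (∑ i, ((o i : ℕ) : ZMod 2)) = 0 := by
      rw [← Nat.cast_sum, zmod2_cast_eq_zero_iff]
      exact hme.trans (Nat.dvd_of_mod_eq_zero hsum)
    simp only [hg, hmz, hsum2]
    ring
  · -- m odd: each gcd is odd, so Σ gcd ≡ k, and m*(2-k) ≡ -k ≡ k
    have hmo : (m : ZMod 2) = 1 := zmod2_cast_odd hme
    have hg : ∀ i, ((Nat.gcd m (o i) : ℕ) : ZMod 2) = 1 := by
      intro i
      exact zmod2_cast_odd fun hd => hme (hd.trans (Nat.gcd_dvd_left _ _))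
    simp only [hg, hmo, Finset.sum_const, Finset.card_univ, Fintype.card_fin, nsmul_eq_mul,
      mul_one, h2]
    ring
end

section
/- A core Ψ = m^{o_1,...,o_k} satisfies χ(Ψ) = 2 if and only if k ≤ 2, if and only if Ψ is either 1^∅ (m=1, k=0) or m^{a, m-a} with m ≥ 2 and gcd(a,m)=1. -/
lemma card_dvd_aux (g m' x' : ℕ) (hg0 : 0 < g) (hm'0 : 0 < m')
    (hco : Nat.Coprime m' x') :
    ((Finset.range (g * m')).filter (fun j => g * m' ∣ j * (g * x'))).card = g := by
  have key : ∀ j, (g * m' ∣ j * (g * x') ↔ m' ∣ j) := by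
    intro j
    constructor
    · intro hd
      have h1 : g * m' ∣ g * (j * x') := by rwa [show g * (j * x') = j * (g * x') by ring]
      have h2 : m' ∣ j * x' := (mul_dvd_mul_iff_left (by omega : g ≠ 0)).mp h1
      exact hco.dvd_of_dvd_mul_right h2
    · rintro ⟨c, rfl⟩
      exact ⟨c * x', by ring⟩
  have himg : (Finset.range (g * m')).filter (fun j => g * m' ∣ j * (g * x'))
      = (Finset.range g).image (fun t => t * m') := by
    ext j
    simp only [Finset.mem_filter, Finset.mem_range, Finset.mem_image, key]
    constructor
    · rintro ⟨hj, c, rfl⟩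
      refine ⟨c, ?_, by ring⟩
      by_contra hc
      push_neg at hc
      have : g * m' ≤ m' * c := Nat.mul_le_mul hc le_rfl |>.trans (by rw [Nat.mul_comm])
      omega
    · rintro ⟨t, ht, rfl⟩
      exact ⟨by exact Nat.mul_lt_mul_of_lt_of_le ht le_rfl hm'0, ⟨t, by ring⟩⟩
  rw [himg, Finset.card_image_of_injective _ (fun a b hab => Nat.eq_of_mul_eq_mul_right hm'0 hab),
    Finset.card_range]

lemma card_dvd_mul (m x : ℕ) (hm : 0 < m) :
    ((Finset.range m).filter (fun j => m ∣ j * x)).card = Nat.gcd m x := by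
  obtain ⟨g, hgdef⟩ : ∃ g, Nat.gcd m x = g := ⟨_, rfl⟩
  have hg0 : 0 < g := hgdef ▸ Nat.gcd_pos_of_pos_left x hm
  obtain ⟨m', hm'⟩ : g ∣ m := hgdef ▸ Nat.gcd_dvd_left m x
  obtain ⟨x', hx'⟩ : g ∣ x := hgdef ▸ Nat.gcd_dvd_right m x
  have hm'0 : 0 < m' := by
    rcases Nat.eq_zero_or_pos m' with h | h
    · subst h; simp at hm'; omega
    · exact h
  have hco : Nat.Coprime m' x' := by
    have h2 := Nat.coprime_div_gcd_div_gcd (m := m) (n := x) (by omega)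
    rw [hgdef] at h2
    have e1 : m / g = m' := by rw [hm', Nat.mul_div_cancel_left _ hg0]
    have e2 : x / g = x' := by rw [hx', Nat.mul_div_cancel_left _ hg0]
    rwa [e1, e2] at h2
  rw [hgdef, hm', hx']
  exact card_dvd_aux g m' x' hg0 hm'0 hco

lemma swap_sum (m k : ℕ) (o : Fin k → ℕ) (hm : 0 < m) :
    ∑ j ∈ Finset.range m, (Finset.univ.filter (fun i : Fin k => m ∣ j * o i)).card
      = ∑ i, Nat.gcd m (o i) := by
  have h1 : ∀ j, (Finset.univ.filter (fun i : Fin k => m ∣ j * o i)).card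
      = ∑ i : Fin k, if m ∣ j * o i then 1 else 0 := fun j => Finset.card_filter _ _
  simp only [h1]
  rw [Finset.sum_comm]
  congr 1
  ext i
  rw [← Finset.card_filter]
  exact card_dvd_mul m (o i) hm

lemma N_bound (m k : ℕ) (o : Fin k → ℕ) (h : IsCore m k o)
    (j : ℕ) (h1 : 1 ≤ j) (h2 : j < m) :
    (Finset.univ.filter (fun i : Fin k => m ∣ j * o i)).card + 2 ≤ k := by
  obtain ⟨hm, ho, hsum, hgcd⟩ := h
  have hcard := Finset.card_filter_add_card_filter_not
    (s := (Finset.univ : Finset (Fin k))) (fun i => m ∣ j * o i)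
  rw [Finset.card_univ, Fintype.card_fin] at hcard
  set S := Finset.univ.filter (fun i : Fin k => ¬ m ∣ j * o i) with hS
  suffices hs : 2 ≤ S.card by omega
  by_contra hlt
  push_neg at hlt
  interval_cases hc : S.card
  · -- S empty: all divisible
    have hall : ∀ i : Fin k, m ∣ j * o i := by
      intro i
      by_contra hni
      have : i ∈ S := by simp [hS, hni]
      have := Finset.card_pos.mpr ⟨i, this⟩
      omega
    have hdg : m ∣ Finset.univ.gcd o * j := by
      have : m ∣ Finset.univ.gcd (fun i : Fin k => j * o i) :=
        Finset.dvd_gcd (fun i _ => hall i)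
      rw [Finset.gcd_mul_left] at this
      simpa [Nat.mul_comm] using this
    have hco : Nat.Coprime m (Finset.univ.gcd o) := hgcd
    have : m ∣ j := hco.dvd_of_dvd_mul_left hdg
    have := Nat.le_of_dvd (by omega) this
    omega
  · -- S singleton
    obtain ⟨i₀, hi₀⟩ := Finset.card_eq_one.mp hc
    have hi₀S : i₀ ∈ S := by simp [hi₀]
    have hnd : ¬ m ∣ j * o i₀ := by
      simpa [hS] using hi₀S
    have hrest : ∀ i : Fin k, i ≠ i₀ → m ∣ j * o i := by
      intro i hne
      by_contra hni
      have : i ∈ S := by simp [hS, hni]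
      rw [hi₀, Finset.mem_singleton] at this
      exact hne this
    have hsdvd : m ∣ ∑ i : Fin k, j * o i := by
      rw [← Finset.mul_sum]
      exact Dvd.dvd.mul_left (Nat.dvd_of_mod_eq_zero hsum) j
    rw [← Finset.add_sum_erase _ _ (Finset.mem_univ i₀)] at hsdvd
    have herest : m ∣ ∑ i ∈ Finset.univ.erase i₀, j * o i :=
      Finset.dvd_sum (fun i hi => hrest i (Finset.ne_of_mem_erase hi))
    exact hnd ((Nat.dvd_add_right herest).mp (by rwa [Nat.add_comm] at hsdvd))

lemma chi_decomp (m k : ℕ) (o : Fin k → ℕ) (hm : 0 < m) :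
    coreChi m k o = ∑ j ∈ Finset.range m,
      ((2 - (k : ℤ)) + ((Finset.univ.filter (fun i : Fin k => m ∣ j * o i)).card : ℤ)) := by
  rw [Finset.sum_add_distrib, Finset.sum_const, Finset.card_range]
  have : ∑ j ∈ Finset.range m,
      (((Finset.univ.filter (fun i : Fin k => m ∣ j * o i)).card : ℤ))
      = ((∑ j ∈ Finset.range m,
        (Finset.univ.filter (fun i : Fin k => m ∣ j * o i)).card : ℕ) : ℤ) := by
    push_cast; ring
  rw [this, swap_sum m k o hm]
  unfold coreChi
  push_cast
  ring

lemma k_eq_zero_of_m_eq_one (k : ℕ) (o : Fin k → ℕ) (ho : ∀ i, 1 ≤ o i ∧ o i < 1) :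
    k = 0 := by
  by_contra hk
  have := ho ⟨0, Nat.pos_of_ne_zero hk⟩
  omega

lemma chi_eq_two_of_k_le_two (m k : ℕ) (o : Fin k → ℕ) (h : IsCore m k o) (hk : k ≤ 2) :
    coreChi m k o = 2 := by
  obtain ⟨hm, ho, hsum, hgcd⟩ := h
  rcases Nat.eq_or_lt_of_le hm with hm1 | hm2
  · -- m = 1
    have hm1 : m = 1 := hm1.symm
    subst hm1
    have hk0 : k = 0 := k_eq_zero_of_m_eq_one k o ho
    subst hk0
    simp [coreChi]
  · -- m ≥ 2
    interval_cases k
    · exfalso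
      rw [Finset.univ_eq_empty, Finset.gcd_empty, Nat.gcd_zero_right] at hgcd
      omega
    · exfalso
      rw [Fin.sum_univ_one] at hsum
      have := ho 0
      rw [Nat.mod_eq_of_lt this.2] at hsum
      omega
    · -- k = 2
      rw [Fin.sum_univ_two] at hsum
      have h0 := ho 0
      have h1 := ho 1
      have hdvd : m ∣ o 0 + o 1 := Nat.dvd_of_mod_eq_zero hsum
      obtain ⟨c, hc⟩ := hdvd
      have hc1 : c = 1 := by
        have hc0 : c ≠ 0 := by rintro rfl; simp at hc; omega
        have hlt2 : c < 2 := by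
          by_contra hge
          push_neg at hge
          have := Nat.mul_le_mul_left m hge
          omega
        omega
      have hsum' : o 0 + o 1 = m := by subst hc1; simpa using hc
      -- gcd m (o i) = 1
      have hg : ∀ i : Fin 2, Nat.gcd m (o i) = 1 := by
        have key : ∀ a b : ℕ, a + b = m → Nat.gcd m a ∣ 1 →  Nat.gcd m a = 1 :=
          fun a b hab hd => Nat.dvd_one.mp hd
        intro i
        have d0 : Nat.gcd m (o 0) ∣ o 1 := by
          have he : o 1 = m - o 0 := by omega
          rw [he]
          exact Nat.dvd_sub (Nat.gcd_dvd_left _ _) (Nat.gcd_dvd_right _ _)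
        have d1 : Nat.gcd m (o 1) ∣ o 0 := by
          have he : o 0 = m - o 1 := by omega
          rw [he]
          exact Nat.dvd_sub (Nat.gcd_dvd_left _ _) (Nat.gcd_dvd_right _ _)
        have hdvd2 : Nat.gcd m (o i) ∣ Nat.gcd m (Finset.univ.gcd o) := by
          refine Nat.dvd_gcd (Nat.gcd_dvd_left _ _) ?_
          refine Finset.dvd_gcd (fun b _ => ?_)
          have hi : i = 0 ∨ i = 1 := by
            rcases i with ⟨iv, hiv⟩
            interval_cases iv
            · left; rfl
            · right; rfl
          have hb : b = 0 ∨ b = 1 := by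
            rcases b with ⟨bv, hbv⟩
            interval_cases bv
            · left; rfl
            · right; rfl
          rcases hi with rfl | rfl <;> rcases hb with rfl | rfl
          · exact Nat.gcd_dvd_right _ _
          · exact d0
          · exact d1
          · exact Nat.gcd_dvd_right _ _
        rw [hgcd] at hdvd2
        exact Nat.dvd_one.mp hdvd2
      unfold coreChi
      rw [Fin.sum_univ_two, hg 0, hg 1]
      push_cast
      ring

lemma k_le_two_of_chi_eq_two (m k : ℕ) (o : Fin k → ℕ) (h : IsCore m k o)
    (hchi : coreChi m k o = 2) : k ≤ 2 := by
  obtain ⟨hm, ho, -, -⟩ := id h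
  rcases Nat.eq_or_lt_of_le hm with hm1 | hm2
  · have hmo : m = 1 := hm1.symm
    subst hmo
    have : k = 0 := k_eq_zero_of_m_eq_one k o ho
    omega
  · obtain ⟨n, rfl⟩ : ∃ n, m = n + 2 := ⟨m - 2, by omega⟩
    have hdec := chi_decomp (n + 2) k o (by omega)
    rw [Finset.sum_range_succ', Finset.sum_range_succ'] at hdec
    have hN0 : ((Finset.univ.filter (fun i : Fin k => (n + 2) ∣ 0 * o i)).card : ℤ)
        = (k : ℤ) := by
      norm_cast
      have he : (Finset.univ.filter (fun i : Fin k => (n + 2) ∣ 0 * o i))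
          = Finset.univ := by
        ext i; simp
      rw [he, Finset.card_univ, Fintype.card_fin]
    have hN1 : ((Finset.univ.filter (fun i : Fin k => (n + 2) ∣ (0 + 1) * o i)).card : ℤ)
        = 0 := by
      norm_cast
      rw [Finset.card_eq_zero]
      ext i
      simp only [Finset.mem_filter, Finset.mem_univ, true_and, Finset.notMem_empty,
        iff_false, zero_add, one_mul]
      intro hd
      have := Nat.le_of_dvd (by have := (ho i).1; omega) hd
      have := (ho i).2
      omega
    have hle : ∑ j ∈ Finset.range n, ((2 - (k : ℤ))
        + ((Finset.univ.filter (fun i : Fin k => (n + 2) ∣ (j + 1 + 1) * o i)).card : ℤ)) ≤ 0 := by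
      apply Finset.sum_nonpos
      intro j hj
      rw [Finset.mem_range] at hj
      have := N_bound (n + 2) k o h (j + 1 + 1) (by omega) (by omega)
      omega
    rw [hchi, hN0, hN1] at hdec
    have : (k : ℤ) ≤ 2 := by linarith
    exact_mod_cast this

lemma structure_of_k_le_two (m k : ℕ) (o : Fin k → ℕ) (h : IsCore m k o) (hk : k ≤ 2) :
    ((m = 1 ∧ k = 0) ∨
      (2 ≤ m ∧ k = 2 ∧ ∀ i j : Fin k, i ≠ j →
        o i + o j = m ∧ Nat.Coprime (o i) m)) := by
  obtain ⟨hm, ho, hsum, hgcd⟩ := id h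
  rcases Nat.eq_or_lt_of_le hm with hm1 | hm2
  · have hmo : m = 1 := hm1.symm
    subst hmo
    exact Or.inl ⟨rfl, k_eq_zero_of_m_eq_one k o ho⟩
  · right
    refine ⟨hm2, ?_⟩
    interval_cases k
    · exfalso
      rw [Finset.univ_eq_empty, Finset.gcd_empty, Nat.gcd_zero_right] at hgcd
      omega
    · exfalso
      rw [Fin.sum_univ_one] at hsum
      have := ho 0
      rw [Nat.mod_eq_of_lt this.2] at hsum
      omega
    · refine ⟨rfl, ?_⟩
      rw [Fin.sum_univ_two] at hsum
      have h0 := ho 0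
      have h1 := ho 1
      have hdvd : m ∣ o 0 + o 1 := Nat.dvd_of_mod_eq_zero hsum
      obtain ⟨c, hc⟩ := hdvd
      have hc1 : c = 1 := by
        have hc0 : c ≠ 0 := by rintro rfl; simp at hc; omega
        have hlt2 : c < 2 := by
          by_contra hge
          push_neg at hge
          have := Nat.mul_le_mul_left m hge
          omega
        omega
      have hsum' : o 0 + o 1 = m := by subst hc1; simpa using hc
      have hg : ∀ i : Fin 2, Nat.gcd m (o i) = 1 := by
        intro i
        have d0 : Nat.gcd m (o 0) ∣ o 1 := by
          have he : o 1 = m - o 0 := by omega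
          rw [he]
          exact Nat.dvd_sub (Nat.gcd_dvd_left _ _) (Nat.gcd_dvd_right _ _)
        have d1 : Nat.gcd m (o 1) ∣ o 0 := by
          have he : o 0 = m - o 1 := by omega
          rw [he]
          exact Nat.dvd_sub (Nat.gcd_dvd_left _ _) (Nat.gcd_dvd_right _ _)
        have hdvd2 : Nat.gcd m (o i) ∣ Nat.gcd m (Finset.univ.gcd o) := by
          refine Nat.dvd_gcd (Nat.gcd_dvd_left _ _) ?_
          refine Finset.dvd_gcd (fun b _ => ?_)
          have hi : i = 0 ∨ i = 1 := by
            rcases i with ⟨iv, hiv⟩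
            interval_cases iv
            · left; rfl
            · right; rfl
          have hb : b = 0 ∨ b = 1 := by
            rcases b with ⟨bv, hbv⟩
            interval_cases bv
            · left; rfl
            · right; rfl
          rcases hi with rfl | rfl <;> rcases hb with rfl | rfl
          · exact Nat.gcd_dvd_right _ _
          · exact d0
          · exact d1
          · exact Nat.gcd_dvd_right _ _
        rw [hgcd] at hdvd2
        exact Nat.dvd_one.mp hdvd2
      intro i j hij
      have hi : i = 0 ∨ i = 1 := by
        rcases i with ⟨iv, hiv⟩
        interval_cases iv
        · left; rfl
        · right; rfl
      have hj : j = 0 ∨ j = 1 := by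
        rcases j with ⟨jv, hjv⟩
        interval_cases jv
        · left; rfl
        · right; rfl
      rcases hi with rfl | rfl <;> rcases hj with rfl | rfl
      · exact absurd rfl hij
      · exact ⟨hsum', Nat.coprime_comm.mp (hg 0)⟩
      · exact ⟨by omega, Nat.coprime_comm.mp (hg 1)⟩
      · exact absurd rfl hij

/-- `χ(Ψ) = 2` iff `k ≤ 2` iff `Ψ` is `1^∅` or `m^{a, m-a}` with `gcd(a,m) = 1`. -/
theorem coreChi_eq_two_iff (m k : ℕ) (o : Fin k → ℕ) (h : IsCore m k o) :
    (coreChi m k o = 2 ↔ k ≤ 2) ∧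
    (coreChi m k o = 2 ↔
      ((m = 1 ∧ k = 0) ∨
        (2 ≤ m ∧ k = 2 ∧ ∀ i j : Fin k, i ≠ j →
          o i + o j = m ∧ Nat.Coprime (o i) m))) := by
  refine ⟨⟨k_le_two_of_chi_eq_two m k o h, chi_eq_two_of_k_le_two m k o h⟩, ?_, ?_⟩
  · intro hchi
    exact structure_of_k_le_two m k o h (k_le_two_of_chi_eq_two m k o h hchi)
  · rintro (⟨hm1, hk0⟩ | ⟨hm2, hk2, -⟩) <;>
      exact chi_eq_two_of_k_le_two m k o h (by omega)
end

section
/- A core Ψ = m^{o_1,...,o_k} with k ≥ 3 satisfies χ(Ψ) = 0 if and only if (m; o_1,...,o_k) is, up to permutation of the o_i, one of: (2;1,1,1,1), (3;1,1,1), (3;2,2,2), (4;1,1,2), (4;3,3,2), (6;1,2,3), (6;5,4,3). -/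
/-- The multiset of values of a core. -/
def coreMultiset (k : ℕ) (o : Fin k → ℕ) : Multiset ℕ :=
  (Finset.univ : Finset (Fin k)).val.map o

lemma sum_gcd_eq_core (m k : ℕ) (o : Fin k → ℕ) :
    ∑ i, (Nat.gcd m (o i) : ℤ) =
      ((coreMultiset k o).map (fun x => (Nat.gcd m x : ℤ))).sum := by
  simp [coreMultiset, Finset.sum, Multiset.map_map]; rfl

lemma card_coreMultiset (k : ℕ) (o : Fin k → ℕ) :
    Multiset.card (coreMultiset k o) = k := by
  simp [coreMultiset]

lemma core_bound_aux (a b c : ℕ) (ha : 7 ≤ a) (hb : 2 ≤ b) (hc : 4 ≤ c)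
    (key : b*c + a*c + a*b = a*b*c) : False := by
  have h1 : 4*(a*b) ≤ a*(b*c) := by
    have := Nat.mul_le_mul_left (a*b) hc; linarith
  have h2 : 2*(a*c) ≤ a*(b*c) := by
    have := Nat.mul_le_mul_left (a*c) hb; linarith
  have h3 : 7*(b*c) ≤ a*(b*c) := by
    have := Nat.mul_le_mul_left (b*c) ha; linarith
  nlinarith [key]

lemma core_bound (a b c : ℕ) (ha : 2 ≤ a) (hb : 2 ≤ b) (hc : 2 ≤ c)
    (key : b*c + a*c + a*b = a*b*c) : a ≤ 6 := by
  by_contra h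
  push_neg at h
  rcases Nat.lt_or_ge 3 c with hc3 | hc3
  · exact core_bound_aux a b c (by omega) hb (by omega) key
  · rcases Nat.lt_or_ge 3 b with hb3 | hb3
    · refine core_bound_aux a c b (by omega) hc (by omega) (by linarith [key])
    · interval_cases b <;> interval_cases c <;> omega

lemma core_key_lemma (m d1 d2 d3 : ℕ) (h1 : d1 ∣ m) (h2 : d2 ∣ m) (h3 : d3 ∣ m)
    (p1 : 1 ≤ d1) (p2 : 1 ≤ d2) (p3 : 1 ≤ d3)
    (q1 : 2*d1 ≤ m) (q2 : 2*d2 ≤ m) (q3 : 2*d3 ≤ m)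
    (hs : d1 + d2 + d3 = m) :
    ∃ d, d ∣ d1 ∧ d ∣ d2 ∧ d ∣ d3 ∧ m ≤ 6 * d := by
  obtain ⟨a1, e1⟩ := h1
  obtain ⟨a2, e2⟩ := h2
  obtain ⟨a3, e3⟩ := h3
  have ha1 : 2 ≤ a1 := by nlinarith
  have ha2 : 2 ≤ a2 := by nlinarith
  have ha3 : 2 ≤ a3 := by nlinarith
  have key : a2*a3 + a1*a3 + a1*a2 = a1*a2*a3 := by
    have hm : 0 < m := by omega
    apply Nat.eq_of_mul_eq_mul_left hm
    calc m * (a2*a3 + a1*a3 + a1*a2)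
        = (d1*a1)*(a2*a3) + (d2*a2)*(a1*a3) + (d3*a3)*(a1*a2) := by
          rw [← e1, ← e2, ← e3]; ring
      _ = (d1 + d2 + d3) * (a1*a2*a3) := by ring
      _ = m * (a1*a2*a3) := by rw [hs]
  have b1 := core_bound a1 a2 a3 ha1 ha2 ha3 key
  have b2 := core_bound a2 a1 a3 ha2 ha1 ha3 (by linarith [key])
  have b3 := core_bound a3 a1 a2 ha3 ha1 ha2 (by linarith [key])
  interval_cases a1 <;> interval_cases a2 <;> interval_cases a3 <;>
    first
      | omega
      | (refine ⟨d1, ?_, ?_, ?_, by omega⟩ <;>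
          first | exact ⟨1, by omega⟩ | exact ⟨2, by omega⟩ | exact ⟨3, by omega⟩)
      | (refine ⟨d2, ?_, ?_, ?_, by omega⟩ <;>
          first | exact ⟨1, by omega⟩ | exact ⟨2, by omega⟩ | exact ⟨3, by omega⟩)
      | (refine ⟨d3, ?_, ?_, ?_, by omega⟩ <;>
          first | exact ⟨1, by omega⟩ | exact ⟨2, by omega⟩ | exact ⟨3, by omega⟩)

/-- Classification of cores with `k ≥ 3` and `χ = 0`. -/
theorem coreChi_eq_zero_iff (m k : ℕ) (o : Fin k → ℕ) (h : IsCore m k o) (hk : 3 ≤ k) :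
    coreChi m k o = 0 ↔
      ((m = 2 ∧ coreMultiset k o = {1, 1, 1, 1}) ∨
       (m = 3 ∧ coreMultiset k o = {1, 1, 1}) ∨
       (m = 3 ∧ coreMultiset k o = {2, 2, 2}) ∨
       (m = 4 ∧ coreMultiset k o = {1, 1, 2}) ∨
       (m = 4 ∧ coreMultiset k o = {3, 3, 2}) ∨
       (m = 6 ∧ coreMultiset k o = {1, 2, 3}) ∨
       (m = 6 ∧ coreMultiset k o = {5, 4, 3})) := by
  constructor
  · intro hchi
    obtain ⟨hm, ho, hsum, hgcd⟩ := h
    have hd_pos : ∀ i, 1 ≤ Nat.gcd m (o i) := fun i =>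
      Nat.gcd_pos_of_pos_left _ (by omega)
    have hd_dvd : ∀ i, Nat.gcd m (o i) ∣ m := fun i => Nat.gcd_dvd_left _ _
    have hd_le : ∀ i, 2 * Nat.gcd m (o i) ≤ m := by
      intro i
      have h1 : Nat.gcd m (o i) ∣ m := Nat.gcd_dvd_left _ _
      have h2 : Nat.gcd m (o i) ≤ o i := Nat.le_of_dvd (ho i).1 (Nat.gcd_dvd_right _ _)
      obtain ⟨c, hc⟩ := h1
      have : 2 ≤ c := by nlinarith [(ho i).2, hd_pos i]
      nlinarith [hd_pos i]
    have hsum' : (∑ i, Nat.gcd m (o i)) + 2 * m = m * k := by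
      have h2 : ((∑ i, Nat.gcd m (o i) : ℕ) : ℤ) + 2*m = m*k := by
        unfold coreChi at hchi
        push_cast
        nlinarith [hchi]
      exact_mod_cast h2
    have hk4 : k ≤ 4 := by
      have h2 : 2 * (∑ i, Nat.gcd m (o i)) ≤ k * m := by
        calc 2 * ∑ i, Nat.gcd m (o i) = ∑ i : Fin k, 2 * Nat.gcd m (o i) := by
              rw [Finset.mul_sum]
          _ ≤ ∑ _i : Fin k, m := Finset.sum_le_sum (fun i _ => hd_le i)
          _ = k * m := by simp [Finset.sum_const, Finset.card_univ]
      nlinarith [hsum', hm]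
    interval_cases k
    -- k = 3
    · rw [Fin.sum_univ_three] at hsum hsum'
      have hs3 : Nat.gcd m (o 0) + Nat.gcd m (o 1) + Nat.gcd m (o 2) = m := by omega
      obtain ⟨d, hd0, hd1, hd2, hd6⟩ := core_key_lemma m _ _ _
        (hd_dvd 0) (hd_dvd 1) (hd_dvd 2) (hd_pos 0) (hd_pos 1) (hd_pos 2)
        (hd_le 0) (hd_le 1) (hd_le 2) hs3
      have hdvo : ∀ i : Fin 3, d ∣ o i := by
        intro i
        fin_cases i
        · exact hd0.trans (Nat.gcd_dvd_right _ _)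
        · exact hd1.trans (Nat.gcd_dvd_right _ _)
        · exact hd2.trans (Nat.gcd_dvd_right _ _)
      have hd1' : d ∣ 1 := hgcd ▸ Nat.dvd_gcd (hd0.trans (hd_dvd 0))
        (Finset.dvd_gcd (fun i _ => hdvo i))
      have hm6 : m ≤ 6 := by
        have := Nat.le_of_dvd one_pos hd1'; omega
      have hm2 : 2 ≤ m := by have := hd_le 0; have := hd_pos 0; omega
      have hb0 := ho 0
      have hb1 := ho 1
      have hb2 := ho 2
      have hgcd3 : Nat.gcd m (Nat.gcd (o 0) (Nat.gcd (o 1) (o 2))) = 1 := by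
        rw [show Finset.univ.gcd o = Nat.gcd (o 0) (Nat.gcd (o 1) (o 2)) from by
          rw [show (Finset.univ : Finset (Fin 3)) = {0, 1, 2} from rfl]
          simp only [Finset.gcd_insert, Finset.gcd_singleton, normalize_eq]
          rfl] at hgcd
        exact hgcd
      rw [show coreMultiset 3 o = {o 0, o 1, o 2} from rfl]
      obtain ⟨hb01, hb02⟩ := hb0
      obtain ⟨hb11, hb12⟩ := hb1
      obtain ⟨hb21, hb22⟩ := hb2
      set a := o 0 with ha
      set b := o 1 with hb
      set c := o 2 with hc
      clear_value a b c
      clear ha hb hc hdvo hd0 hd1 hd2 hd1' hd6 hgcd hchi hd_pos hd_dvd hd_le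
      interval_cases m <;> interval_cases a <;> interval_cases b <;> interval_cases c <;>
        revert hsum hsum' hgcd3 <;> decide
    -- k = 4
    · rw [Fin.sum_univ_four] at hsum hsum'
      have e : ∀ i : Fin 4, 2 * Nat.gcd m (o i) = m := by
        have h0 := hd_le 0; have h1 := hd_le 1; have h2 := hd_le 2; have h3 := hd_le 3
        intro i; fin_cases i <;> simp <;> omega
      have hv : ∀ i : Fin 4, Nat.gcd m (o 0) = Nat.gcd m (o i) := fun i => by
        have h1 := e 0; have h2 := e i; omega
      have hdvd : ∀ i : Fin 4, Nat.gcd m (o 0) ∣ o i := fun i =>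
        hv i ▸ Nat.gcd_dvd_right m (o i)
      have hd1' : Nat.gcd m (o 0) ∣ 1 := hgcd ▸ Nat.dvd_gcd (Nat.gcd_dvd_left _ _)
        (Finset.dvd_gcd (fun i _ => hdvd i))
      have hm2 : m = 2 := by
        have h1 := e 0
        have := Nat.le_of_dvd one_pos hd1'
        have := hd_pos 0
        omega
      have hoi : ∀ i : Fin 4, o i = 1 := fun i => by
        have := ho i; omega
      left
      refine ⟨hm2, ?_⟩
      rw [show coreMultiset 4 o = {o 0, o 1, o 2, o 3} from rfl,
        hoi 0, hoi 1, hoi 2, hoi 3]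
  · intro hyp
    unfold coreChi
    rw [sum_gcd_eq_core]
    rcases hyp with ⟨hm, hmul⟩|⟨hm, hmul⟩|⟨hm, hmul⟩|⟨hm, hmul⟩|⟨hm, hmul⟩|⟨hm, hmul⟩|⟨hm, hmul⟩ <;>
    · have hkc : k = Multiset.card (coreMultiset k o) := (card_coreMultiset k o).symm
      rw [hmul] at hkc
      subst hm
      rw [hmul]
      norm_num at hkc ⊢
      subst hkc
      decide
end

section
/- Every core Ψ = m^{o_1,...,o_k} with k ≥ 3 and m ≥ 2 satisfies χ(Ψ) ≤ 0. -/
lemma two_mul_le_of_dvd_lt {a m : ℕ} (hd : a ∣ m) (h : a < m) : 2 * a ≤ m := by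
  obtain ⟨t, rfl⟩ := hd
  rcases Nat.lt_or_ge t 2 with ht | ht
  · interval_cases t <;> omega
  · nlinarith

lemma two_big {b c m : ℕ} (hb : 2 ≤ b) (hc : 2 ≤ c) (hbc : Nat.Coprime b c)
    (hbm : b ∣ m) (hcm : c ∣ m) (hm : 0 < m) : 1 + b + c ≤ m := by
  have hdvd : b * c ∣ m := hbc.mul_dvd_of_dvd_of_dvd hbm hcm
  have hle : b * c ≤ m := Nat.le_of_dvd hm hdvd
  have hne : b ≠ c := by
    intro h; subst h
    simp [Nat.Coprime, Nat.gcd_self] at hbc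
    omega
  have h3 : 3 ≤ b ∨ 3 ≤ c := by omega
  rcases h3 with h3 | h3
  · nlinarith
  · nlinarith

lemma sum3_le {a b c m : ℕ} (ha : a ∣ m) (hb : b ∣ m) (hc : c ∣ m)
    (ha2 : 2 * a ≤ m) (hb2 : 2 * b ≤ m) (hc2 : 2 * c ≤ m)
    (hab : Nat.Coprime a b) (hac : Nat.Coprime a c) (hbc : Nat.Coprime b c)
    (ha1 : 1 ≤ a) (hb1 : 1 ≤ b) (hc1 : 1 ≤ c) (hm : 3 ≤ m) :
    a + b + c ≤ m := by
  have hm0 : 0 < m := by omega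
  by_cases haa : 2 ≤ a
  · by_cases hbb : 2 ≤ b
    · -- a, b ≥ 2, consider c
      by_cases hcc : 2 ≤ c
      · have hdvd : a * b * c ∣ m :=
          ((Nat.Coprime.mul hac hbc).mul_dvd_of_dvd_of_dvd
            (hab.mul_dvd_of_dvd_of_dvd ha hb) hc)
        have hle : a * b * c ≤ m := Nat.le_of_dvd hm0 hdvd
        have hab4 : 4 ≤ a * b := Nat.mul_le_mul haa hbb
        have hbc4 : 4 ≤ b * c := Nat.mul_le_mul hbb hcc
        have hac4 : 4 ≤ a * c := Nat.mul_le_mul haa hcc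
        have h1 : 4 * c ≤ a * b * c := by
          calc 4 * c ≤ (a * b) * c := Nat.mul_le_mul_right c hab4
            _ = a * b * c := by ring
        have h2 : 4 * a ≤ a * b * c := by
          calc 4 * a ≤ (b * c) * a := Nat.mul_le_mul_right a hbc4
            _ = a * b * c := by ring
        have h3 : 4 * b ≤ a * b * c := by
          calc 4 * b ≤ (a * c) * b := Nat.mul_le_mul_right b hac4
            _ = a * b * c := by ring
        linarith
      · have hc1' : c = 1 := by omega
        subst hc1'
        have := two_big haa hbb hab ha hb hm0
        omega
    · have hb1' : b = 1 := by omega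
      subst hb1'
      by_cases hcc : 2 ≤ c
      · have := two_big haa hcc hac ha hc hm0
        omega
      · -- b = c = 1, a ≥ 2 : a + 2 ≤ 2a ≤ m
        omega
  · have ha1' : a = 1 := by omega
    subst ha1'
    by_cases hbb : 2 ≤ b
    · by_cases hcc : 2 ≤ c
      · have := two_big hbb hcc hbc hb hc hm0
        omega
      · omega
    · by_cases hcc : 2 ≤ c
      · omega
      · omega

/-- Every core with `k ≥ 3` (and `m ≥ 2`) has `χ ≤ 0`. -/
theorem coreChi_nonpos (m k : ℕ) (o : Fin k → ℕ) (h : IsCore m k o)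
    (hk : 3 ≤ k) (hm : 2 ≤ m) :
    coreChi m k o ≤ 0 := by
  obtain ⟨hm1, ho, hsum, hgcd⟩ := h
  have hd : ∀ i, Nat.gcd m (o i) ∣ m := fun i => Nat.gcd_dvd_left _ _
  have hdlt : ∀ i, Nat.gcd m (o i) < m := fun i =>
    lt_of_le_of_lt (Nat.le_of_dvd (ho i).1 (Nat.gcd_dvd_right _ _)) (ho i).2
  have hd2 : ∀ i, 2 * Nat.gcd m (o i) ≤ m := fun i => two_mul_le_of_dvd_lt (hd i) (hdlt i)
  have hd1 : ∀ i, 1 ≤ Nat.gcd m (o i) := fun i =>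
    Nat.pos_of_ne_zero fun h0 => by
      have := Nat.eq_zero_of_gcd_eq_zero_left h0; omega
  rcases Nat.lt_or_ge k 4 with hk4 | hk4
  · -- k = 3
    have hk3 : k = 3 := by omega
    subst hk3
    have key : ∀ g, g ∣ m → (∀ i : Fin 3, g ∣ o i) → g = 1 := by
      intro g hgm hgo
      have : g ∣ Nat.gcd m (Finset.univ.gcd o) :=
        Nat.dvd_gcd hgm (Finset.dvd_gcd fun i _ => hgo i)
      rw [hgcd] at this
      exact Nat.dvd_one.mp this
    have hsum3 : m ∣ o 0 + o 1 + o 2 := by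
      have := Nat.dvd_of_mod_eq_zero hsum
      rwa [Fin.sum_univ_three] at this
    have cop01 : Nat.Coprime (Nat.gcd m (o 0)) (Nat.gcd m (o 1)) := by
      set g := Nat.gcd (Nat.gcd m (o 0)) (Nat.gcd m (o 1)) with hg
      have hgm : g ∣ m := (Nat.gcd_dvd_left _ _).trans (Nat.gcd_dvd_left _ _)
      have h0 : g ∣ o 0 := (Nat.gcd_dvd_left _ _).trans (Nat.gcd_dvd_right _ _)
      have h1 : g ∣ o 1 := (Nat.gcd_dvd_right _ _).trans (Nat.gcd_dvd_right _ _)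
      have h2 : g ∣ o 2 := by
        have hs : g ∣ o 0 + o 1 + o 2 := hgm.trans hsum3
        have := Nat.dvd_sub hs (Nat.dvd_add h0 h1)
        have heq : o 0 + o 1 + o 2 - (o 0 + o 1) = o 2 := by omega
        rwa [heq] at this
      exact key g hgm (fun i => by fin_cases i <;> assumption)
    have cop02 : Nat.Coprime (Nat.gcd m (o 0)) (Nat.gcd m (o 2)) := by
      set g := Nat.gcd (Nat.gcd m (o 0)) (Nat.gcd m (o 2)) with hg
      have hgm : g ∣ m := (Nat.gcd_dvd_left _ _).trans (Nat.gcd_dvd_left _ _)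
      have h0 : g ∣ o 0 := (Nat.gcd_dvd_left _ _).trans (Nat.gcd_dvd_right _ _)
      have h2 : g ∣ o 2 := (Nat.gcd_dvd_right _ _).trans (Nat.gcd_dvd_right _ _)
      have h1 : g ∣ o 1 := by
        have hs : g ∣ o 0 + o 1 + o 2 := hgm.trans hsum3
        have := Nat.dvd_sub hs (Nat.dvd_add h0 h2)
        have heq : o 0 + o 1 + o 2 - (o 0 + o 2) = o 1 := by omega
        rwa [heq] at this
      exact key g hgm (fun i => by fin_cases i <;> assumption)
    have cop12 : Nat.Coprime (Nat.gcd m (o 1)) (Nat.gcd m (o 2)) := by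
      set g := Nat.gcd (Nat.gcd m (o 1)) (Nat.gcd m (o 2)) with hg
      have hgm : g ∣ m := (Nat.gcd_dvd_left _ _).trans (Nat.gcd_dvd_left _ _)
      have h1 : g ∣ o 1 := (Nat.gcd_dvd_left _ _).trans (Nat.gcd_dvd_right _ _)
      have h2 : g ∣ o 2 := (Nat.gcd_dvd_right _ _).trans (Nat.gcd_dvd_right _ _)
      have h0 : g ∣ o 0 := by
        have hs : g ∣ o 0 + o 1 + o 2 := hgm.trans hsum3
        have := Nat.dvd_sub hs (Nat.dvd_add h1 h2)
        have heq : o 0 + o 1 + o 2 - (o 1 + o 2) = o 0 := by omega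
        rwa [heq] at this
      exact key g hgm (fun i => by fin_cases i <;> assumption)
    have hm3 : 3 ≤ m := by
      rcases Nat.lt_or_ge m 3 with h3 | h3
      · exfalso
        have hm2 : m = 2 := by omega
        subst hm2
        have h0 := ho 0; have h1 := ho 1; have h2 := ho 2
        rw [Fin.sum_univ_three] at hsum
        omega
      · exact h3
    have hkey : Nat.gcd m (o 0) + Nat.gcd m (o 1) + Nat.gcd m (o 2) ≤ m :=
      sum3_le (hd 0) (hd 1) (hd 2) (hd2 0) (hd2 1) (hd2 2)
        cop01 cop02 cop12 (hd1 0) (hd1 1) (hd1 2) hm3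
    unfold coreChi
    rw [Fin.sum_univ_three]
    have h' : (Nat.gcd m (o 0) : ℤ) + Nat.gcd m (o 1) + Nat.gcd m (o 2) ≤ m := by
      exact_mod_cast hkey
    push_cast
    linarith
  · -- k ≥ 4
    have hS : 2 * ∑ i, Nat.gcd m (o i) ≤ k * m := by
      calc 2 * ∑ i, Nat.gcd m (o i) = ∑ i : Fin k, 2 * Nat.gcd m (o i) := by
            rw [Finset.mul_sum]
        _ ≤ ∑ _i : Fin k, m := Finset.sum_le_sum (fun i _ => hd2 i)
        _ = k * m := by simp [Finset.sum_const, mul_comm]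
    unfold coreChi
    have hS' : 2 * ((∑ i, Nat.gcd m (o i) : ℕ) : ℤ) ≤ (k : ℤ) * m := by
      exact_mod_cast hS
    have hcast : ((∑ i, Nat.gcd m (o i) : ℕ) : ℤ) = ∑ i, (Nat.gcd m (o i) : ℤ) := by
      push_cast; rfl
    rw [hcast] at hS'
    have hk' : (4 : ℤ) ≤ (k : ℤ) := by exact_mod_cast hk4
    have hm' : (0 : ℤ) ≤ (m : ℤ) := by positivity
    nlinarith
end

section
/- For a core Ψ = m^{o_1,...,o_k} with χ(Ψ) ≤ 0, one has k ≤ 4 - χ(Ψ), with equality if and only if k = 2 or Ψ = 2^{1,1,...,1} with k even. -/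
/-- key: a common divisor of `m` and all `o i` except possibly one equals 1. -/
lemma core_aux_dvd (m k : ℕ) (o : Fin k → ℕ) (h : IsCore m k o) (d : ℕ) (j : Fin k)
    (hdm : d ∣ m) (hdo : ∀ i, i ≠ j → d ∣ o i) : d = 1 := by
  obtain ⟨hm, ho, hsum, hgcd⟩ := h
  have hmd : m ∣ ∑ i, o i := Nat.dvd_of_mod_eq_zero hsum
  have h1 : d ∣ ∑ i, o i := hdm.trans hmd
  have h2 : d ∣ ∑ i ∈ Finset.univ.erase j, o i :=
    Finset.dvd_sum (fun i hi => hdo i (Finset.ne_of_mem_erase hi))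
  have h3 : o j + ∑ i ∈ Finset.univ.erase j, o i = ∑ i, o i :=
    Finset.add_sum_erase _ _ (Finset.mem_univ j)
  have h4 : d ∣ o j := by
    have h5 := Nat.dvd_sub h1 h2
    rwa [show (∑ i, o i) - ∑ i ∈ Finset.univ.erase j, o i = o j by omega] at h5
  have h5 : d ∣ Finset.univ.gcd o :=
    Finset.dvd_gcd (fun i _ => if hij : i = j then hij ▸ h4 else hdo i hij)
  have h6 : d ∣ Nat.gcd m (Finset.univ.gcd o) := Nat.dvd_gcd hdm h5
  rw [hgcd] at h6
  exact Nat.dvd_one.mp h6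

lemma core_two_big (m y z : ℕ) (hy : 2 ≤ y) (hz : 2 ≤ z) (hne : y ≠ z)
    (hyz : y * z ≤ m) : y + z + 1 ≤ m := by
  rcases Nat.lt_or_ge y z with hlt | hge
  · have p : 2 * z ≤ y * z := Nat.mul_le_mul_right z hy
    omega
  · have hlt : z < y := by omega
    have p : y * 2 ≤ y * z := Nat.mul_le_mul_left y hz
    omega

lemma core_triple (m x y z : ℕ) (hm : 4 ≤ m)
    (hx1 : 1 ≤ x) (hy1 : 1 ≤ y) (hz1 : 1 ≤ z)
    (hx2 : 2 * x ≤ m) (hy2 : 2 * y ≤ m) (hz2 : 2 * z ≤ m)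
    (hxm : x ∣ m) (hym : y ∣ m) (hzm : z ∣ m)
    (hxy : Nat.gcd x y = 1) (hxz : Nat.gcd x z = 1) (hyz : Nat.gcd y z = 1) :
    x + y + z ≤ m := by
  have hm0 : 0 < m := by omega
  have hxyd : x * y ∣ m := Nat.Coprime.mul_dvd_of_dvd_of_dvd hxy hxm hym
  have hxzd : x * z ∣ m := Nat.Coprime.mul_dvd_of_dvd_of_dvd hxz hxm hzm
  have hyzd : y * z ∣ m := Nat.Coprime.mul_dvd_of_dvd_of_dvd hyz hym hzm
  have hxyz : Nat.Coprime (x * y) z := Nat.Coprime.mul hxz hyz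
  have hxyzd : x * y * z ∣ m := Nat.Coprime.mul_dvd_of_dvd_of_dvd hxyz hxyd hzm
  have hxyl : x * y ≤ m := Nat.le_of_dvd hm0 hxyd
  have hxzl : x * z ≤ m := Nat.le_of_dvd hm0 hxzd
  have hyzl : y * z ≤ m := Nat.le_of_dvd hm0 hyzd
  have hxyzl : x * y * z ≤ m := Nat.le_of_dvd hm0 hxyzd
  have exy : x = y → x = 1 := fun e => by rw [e, Nat.gcd_self] at hxy; omega
  have exz : x = z → x = 1 := fun e => by rw [e, Nat.gcd_self] at hxz; omega
  have eyz : y = z → y = 1 := fun e => by rw [e, Nat.gcd_self] at hyz; omega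
  by_cases hx : x = 1
  · by_cases hy : y = 1
    · omega
    · by_cases hz : z = 1
      · omega
      · have := core_two_big m y z (by omega) (by omega) (fun e => by omega) hyzl
        omega
  · by_cases hy : y = 1
    · by_cases hz : z = 1
      · omega
      · have := core_two_big m x z (by omega) (by omega) (fun e => by omega) hxzl
        omega
    · by_cases hz : z = 1
      · have := core_two_big m x y (by omega) (by omega) (fun e => by omega) hxyl
        omega
      · -- all ≥ 2
        have hx2' : 2 ≤ x := by omega
        have hy2' : 2 ≤ y := by omega
        have hz2' : 2 ≤ z := by omega
        have h1 : x + y ≤ x * y := Nat.add_le_mul hx2' hy2'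
        have h2 : x * y + z ≤ (x * y) * z := Nat.add_le_mul (by nlinarith) hz2'
        omega

/-- For a core with `χ ≤ 0`, `k ≤ 4 - χ`, with equality iff `k = 2` or
`Ψ = 2^{1,...,1}` with `k` even. -/
theorem core_k_bound (m k : ℕ) (o : Fin k → ℕ) (h : IsCore m k o)
    (hchi : coreChi m k o ≤ 0) :
    (k : ℤ) ≤ 4 - coreChi m k o ∧
    ((k : ℤ) = 4 - coreChi m k o ↔
      (k = 2 ∨ (m = 2 ∧ Even k ∧ ∀ i, o i = 1))) := by
  obtain ⟨hm1, ho, hsum, hgcd⟩ := h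
  have hcore : IsCore m k o := ⟨hm1, ho, hsum, hgcd⟩
  -- k = 0 impossible
  by_cases hk0 : k = 0
  · exfalso
    subst hk0
    simp [coreChi] at hchi
    have : (1 : ℤ) ≤ m := by exact_mod_cast hm1
    linarith
  -- k = 1 impossible
  by_cases hk1 : k = 1
  · exfalso
    subst hk1
    have hs : (∑ i : Fin 1, o i) = o 0 := by simp
    rw [hs] at hsum
    have hdvd : m ∣ o 0 := Nat.dvd_of_mod_eq_zero hsum
    have := Nat.le_of_dvd (by have := ho 0; omega) hdvd
    have := ho 0
    omega
  -- k = 2 impossible (χ = 2 > 0)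
  by_cases hk2 : k = 2
  · exfalso
    subst hk2
    have hg0 : Nat.gcd m (o 0) = 1 := by
      refine core_aux_dvd m 2 o hcore _ 1 (Nat.gcd_dvd_left _ _) ?_
      intro i hi
      have : i = 0 := by omega
      rw [this]; exact Nat.gcd_dvd_right _ _
    have hg1 : Nat.gcd m (o 1) = 1 := by
      refine core_aux_dvd m 2 o hcore _ 0 (Nat.gcd_dvd_left _ _) ?_
      intro i hi
      have : i = 1 := by omega
      rw [this]; exact Nat.gcd_dvd_right _ _
    have : coreChi m 2 o = 2 := by
      simp [coreChi, Fin.sum_univ_two, hg0, hg1]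
    omega
  have hk3 : 3 ≤ k := by omega
  -- m ≥ 2
  have hm2 : 2 ≤ m := by
    rcases Nat.lt_or_ge m 2 with hm | hm
    · exfalso; have := ho ⟨0, by omega⟩; omega
    · exact hm
  by_cases hmeq : m = 2
  · -- m = 2 : equality case
    subst hmeq
    have ho1 : ∀ i, o i = 1 := fun i => by have := ho i; omega
    have hsk : (∑ i, o i) = k := by simp [ho1]
    rw [hsk] at hsum
    have heven : Even k := Nat.even_iff.mpr hsum
    have hchieq : coreChi 2 k o = 4 - k := by
      have : ∀ i : Fin k, ((Nat.gcd 2 (o i) : ℤ)) = 1 := fun i => by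
        rw [ho1 i]; norm_num
      simp only [coreChi]
      rw [Finset.sum_congr rfl (fun i _ => this i)]
      simp
      ring
    rw [hchieq]
    constructor
    · linarith
    · constructor
      · intro _; exact Or.inr ⟨rfl, heven, ho1⟩
      · intro _; ring
  · -- m ≥ 3, k ≥ 3 : strict inequality
    have hm3 : 3 ≤ m := by omega
    set g : Fin k → ℕ := fun i => Nat.gcd m (o i) with hg
    set S : ℕ := ∑ i, g i with hS
    have hchiS : coreChi m k o = (m : ℤ) * (2 - k) + S := by
      simp [coreChi, hS, hg]
    have hg1 : ∀ i, 1 ≤ g i := fun i =>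
      Nat.gcd_pos_of_pos_left _ (by omega)
    have hgo : ∀ i, g i ∣ o i := fun i => Nat.gcd_dvd_right _ _
    have hgm : ∀ i, g i ∣ m := fun i => Nat.gcd_dvd_left _ _
    have hglt : ∀ i, g i < m := fun i => by
      have h1 := Nat.le_of_dvd (by have := ho i; omega) (hgo i)
      have := ho i; omega
    have hg2 : ∀ i, 2 * g i ≤ m := by
      intro i
      obtain ⟨t, ht⟩ := hgm i
      have : 2 ≤ t := by
        rcases t with _ | _ | t
        · omega
        · exfalso; have := hglt i; omega
        · omega
      calc 2 * g i = g i * 2 := by ring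
        _ ≤ g i * t := Nat.mul_le_mul_left _ this
        _ = m := ht.symm
    have hS2 : 2 * S ≤ k * m := by
      have : ∑ i, 2 * g i ≤ ∑ _i : Fin k, m :=
        Finset.sum_le_sum (fun i _ => hg2 i)
      simpa [Finset.mul_sum, hS] using this
    -- main bound : 2*m + S + k ≤ m*k + 3 in ℕ
    have hN : 2 * m + S + k ≤ m * k + 3 := by
      by_cases hmm : m = 3
      · -- all g i = 1
        subst hmm
        have hgeq : ∀ i, g i = 1 := fun i => by have := hg2 i; have := hg1 i; omega
        have : S = k := by simp [hS, hgeq]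
        omega
      · have hm4 : 4 ≤ m := by omega
        by_cases hkk : k = 3
        · -- triple case
          subst hkk
          have hfin : ∀ i j l i' : Fin 3, i ≠ l → j ≠ l → i ≠ j → i' ≠ l →
              i' = i ∨ i' = j := by decide
          have key : ∀ (i j l : Fin 3), i ≠ l → j ≠ l → i ≠ j →
              Nat.gcd (g i) (g j) = 1 := by
            intro i j l hil hjl hij
            refine core_aux_dvd m 3 o hcore _ l
              (dvd_trans (Nat.gcd_dvd_left _ _) (hgm i)) ?_
            intro i' hi'
            rcases hfin i j l i' hil hjl hij hi' with rfl | rfl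
            · exact dvd_trans (Nat.gcd_dvd_left _ _) (hgo i')
            · exact dvd_trans (Nat.gcd_dvd_right _ _) (hgo i')
          have c01 := key 0 1 2 (by decide) (by decide) (by decide)
          have c02 := key 0 2 1 (by decide) (by decide) (by decide)
          have c12 := key 1 2 0 (by decide) (by decide) (by decide)
          have htr := core_triple m (g 0) (g 1) (g 2) hm4
            (hg1 0) (hg1 1) (hg1 2) (hg2 0) (hg2 1) (hg2 2)
            (hgm 0) (hgm 1) (hgm 2) c01 c02 c12
          have hSsum : S = g 0 + g 1 + g 2 := by
            rw [hS, Fin.sum_univ_three]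
          omega
        · by_cases hkk4 : k = 4
          · subst hkk4
            have hex : ∃ j : Fin 4, 2 * g j < m := by
              by_contra hno
              push_neg at hno
              have hall : ∀ j : Fin 4, 2 * g j = m := fun j => by
                have := hg2 j; have := hno j; omega
              have hd : g 0 = 1 := by
                refine core_aux_dvd m 4 o hcore _ 0 (hgm 0) ?_
                intro i _
                have : g 0 = g i := by have := hall 0; have := hall i; omega
                exact this ▸ hgo i
              have := hall 0
              omega
            obtain ⟨j, hj⟩ := hex
            have hSsum : S = g 0 + g 1 + g 2 + g 3 := by
              rw [hS, Fin.sum_univ_four]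
            have h0 := hg2 0
            have h1 := hg2 1
            have h2 := hg2 2
            have h3 := hg2 3
            have hjc : j = 0 ∨ j = 1 ∨ j = 2 ∨ j = 3 := by omega
            rcases hjc with rfl | rfl | rfl | rfl <;> omega
          · -- k ≥ 5
            have hk5 : 5 ≤ k := by omega
            obtain ⟨m', rfl⟩ : ∃ m', m = m' + 4 := ⟨m - 4, by omega⟩
            obtain ⟨k', rfl⟩ : ∃ k', k = k' + 5 := ⟨k - 5, by omega⟩
            nlinarith [Nat.zero_le (m' * k'), hS2]
    have hmain : coreChi m k o + k ≤ 3 := by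
      rw [hchiS]
      have c1 : (2 * m + S + k : ℤ) ≤ (m * k + 3 : ℤ) := by exact_mod_cast hN
      nlinarith [c1]
    constructor
    · linarith
    · constructor
      · intro heq; exfalso; linarith
      · rintro (h2 | ⟨hm2', _, _⟩)
        · omega
        · omega
end

section
/- For a core Ψ = m^{o_1,...,o_k} with χ(Ψ) ≤ 0, one has 2 ≤ m ≤ 6 - 2χ(Ψ). -/
lemma two_mul_le_of_dvd (d m : ℕ) (hd : d ∣ m) (hlt : d < m) : 2 * d ≤ m := by
  obtain ⟨t, rfl⟩ := hd
  have ht : 2 ≤ t := by by_contra hh; interval_cases t <;> omega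
  nlinarith

lemma coprime_pair_bound (m b c : ℕ) (hm : 1 ≤ m) (hb : b ∣ m) (hc : c ∣ m)
    (h2b : 2*b ≤ m) (h2c : 2*c ≤ m) (h1b : 1 ≤ b) (h1c : 1 ≤ c)
    (hco : Nat.gcd b c = 1) : 2*(b+c) ≤ m + 4 := by
  rcases eq_or_lt_of_le h1b with hb1 | hb2
  · omega
  rcases eq_or_lt_of_le h1c with hc1 | hc2
  · omega
  have hbc : b * c ∣ m := Nat.Coprime.mul_dvd_of_dvd_of_dvd hco hb hc
  have hle : b * c ≤ m := Nat.le_of_dvd hm hbc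
  nlinarith

lemma k3_bound (m a b c : ℕ) (hm : 1 ≤ m)
    (ha : a ∣ m) (hb : b ∣ m) (hc : c ∣ m)
    (h2a : 2*a ≤ m) (h2b : 2*b ≤ m) (h2c : 2*c ≤ m)
    (h1a : 1 ≤ a) (h1b : 1 ≤ b) (h1c : 1 ≤ c)
    (hab : Nat.gcd a b = 1) (hac : Nat.gcd a c = 1) (hbc : Nat.gcd b c = 1) :
    2*(a+b+c) ≤ m + 6 := by
  rcases eq_or_lt_of_le h1a with ha1 | ha2
  · have := coprime_pair_bound m b c hm hb hc h2b h2c h1b h1c hbc; omega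
  rcases eq_or_lt_of_le h1b with hb1 | hb2
  · have := coprime_pair_bound m a c hm ha hc h2a h2c h1a h1c hac; omega
  rcases eq_or_lt_of_le h1c with hc1 | hc2
  · have := coprime_pair_bound m a b hm ha hb h2a h2b h1a h1b hab; omega
  -- all ≥ 2
  have hne : a ≠ b := by rintro rfl; simp [Nat.gcd_self] at hab; omega
  have hab6 : 6 ≤ a * b := by
    rcases Nat.lt_or_ge a 3 with h3 | h3
    · have : a = 2 := by omega
      subst this
      have : 3 ≤ b := by omega
      nlinarith
    · nlinarith
  have habm : a * b ∣ m := Nat.Coprime.mul_dvd_of_dvd_of_dvd hab ha hb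
  have hcop : Nat.Coprime (a*b) c := Nat.Coprime.mul hac hbc
  have habcm : a * b * c ∣ m := Nat.Coprime.mul_dvd_of_dvd_of_dvd hcop habm hc
  have hle : a * b * c ≤ m := Nat.le_of_dvd hm habcm
  obtain ⟨a', rfl⟩ : ∃ a', a = a' + 2 := ⟨a - 2, by omega⟩
  obtain ⟨b', rfl⟩ : ∃ b', b = b' + 2 := ⟨b - 2, by omega⟩
  obtain ⟨c', rfl⟩ : ∃ c', c = c' + 2 := ⟨c - 2, by omega⟩
  nlinarith

lemma k4_helper (m a b g x y : ℕ) (hm : 1 ≤ m) (hg : 3 ≤ g)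
    (hxy : Nat.gcd x y = 1) (hL : g*x*y ≤ m)
    (h2c : 2*(g*x) ≤ m) (h2d : 2*(g*y) ≤ m)
    (ha : a*g ≤ m) (hb : b*g ≤ m) (hx : 1 ≤ x) (hy : 1 ≤ y) :
    2*(a+b+g*x+g*y) ≤ 3*m+6 := by
  have hgpos : 0 < g := by omega
  have key : g * (2*(a+b+g*x+g*y)) ≤ g * (3*m+6) := by
    rcases eq_or_lt_of_le hy with hy1 | hy2
    · -- y = 1
      have hm2g : 2*g ≤ m := by rw [← hy1] at h2d; simpa using h2d
      nlinarith
    rcases eq_or_lt_of_le hx with hx1 | hx2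
    · -- x = 1
      have hm2g : 2*g ≤ m := by rw [← hx1] at h2c; simpa using h2c
      nlinarith
    -- x, y ≥ 2
    have hne : x ≠ y := by rintro rfl; simp [Nat.gcd_self] at hxy; omega
    have hxy6 : 6 ≤ x * y := by
      rcases Nat.lt_or_ge x 3 with h3 | h3
      · have : x = 2 := by omega
        subst this
        have : 3 ≤ y := by omega
        nlinarith
      · nlinarith
    have hm6g : 6 * g ≤ m := by nlinarith
    have e1 : 2*(x+y) ≤ x*y + 4 := by
      obtain ⟨x', rfl⟩ : ∃ x', x = x' + 2 := ⟨x - 2, by omega⟩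
      obtain ⟨y', rfl⟩ : ∃ y', y = y' + 2 := ⟨y - 2, by omega⟩
      nlinarith
    have e2 : g*(g*x*y) ≤ g*m := Nat.mul_le_mul_left _ hL
    have e4 : 4*m + 4*(g*g) ≤ 2*g*m + 6*g := by
      obtain ⟨g', rfl⟩ : ∃ g', g = g' + 3 := ⟨g - 3, by omega⟩
      nlinarith [Nat.mul_le_mul_left (2*g'+2) hm6g]
    have e5 : g * (2*(a+b+g*x+g*y)) = 2*(a*g) + 2*(b*g) + g*g*(2*(x+y)) := by ring
    have e6 : g*g*(2*(x+y)) ≤ g*g*(x*y+4) := Nat.mul_le_mul_left _ e1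
    have e7 : g*g*(x*y+4) = g*(g*x*y) + 4*(g*g) := by ring
    have e8 : g*(3*m+6) = 2*g*m + (g*m + 6*g) := by ring
    omega
  exact Nat.le_of_mul_le_mul_left key hgpos

lemma k4_pair (m a b c d : ℕ) (hm : 1 ≤ m)
    (hva : a ∣ m) (hvb : b ∣ m) (hvc : c ∣ m) (hvd : d ∣ m)
    (h2c : 2*c ≤ m) (h2d : 2*d ≤ m) (h1c : 1 ≤ c) (h1d : 1 ≤ d)
    (hg3 : 3 ≤ Nat.gcd c d)
    (hacop : Nat.gcd a (Nat.gcd c d) = 1) (hbcop : Nat.gcd b (Nat.gcd c d) = 1) :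
    2*(a+b+c+d) ≤ 3*m+6 := by
  set g := Nat.gcd c d with hgdef
  have hgpos : 0 < g := by omega
  have hgc : g ∣ c := Nat.gcd_dvd_left _ _
  have hgd : g ∣ d := Nat.gcd_dvd_right _ _
  have hgm : g ∣ m := hgc.trans hvc
  have ecx : g * (c / g) = c := Nat.mul_div_cancel' hgc
  have edy : g * (d / g) = d := Nat.mul_div_cancel' hgd
  have hxy : Nat.gcd (c / g) (d / g) = 1 := Nat.coprime_div_gcd_div_gcd hgpos
  have hlcm : Nat.lcm c d = c * (d / g) := by
    rw [Nat.lcm, Nat.mul_div_assoc _ hgd]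
  have hL : g * (c / g) * (d / g) ≤ m := by
    rw [ecx, ← hlcm]
    exact Nat.le_of_dvd hm (Nat.lcm_dvd hvc hvd)
  have h2c' : 2*(g*(c/g)) ≤ m := by rw [ecx]; exact h2c
  have h2d' : 2*(g*(d/g)) ≤ m := by rw [edy]; exact h2d
  have ham : a * g ≤ m := Nat.le_of_dvd hm (Nat.Coprime.mul_dvd_of_dvd_of_dvd hacop hva hgm)
  have hbm : b * g ≤ m := Nat.le_of_dvd hm (Nat.Coprime.mul_dvd_of_dvd_of_dvd hbcop hvb hgm)
  have hx : 1 ≤ c / g := Nat.div_pos (Nat.le_of_dvd (by omega) hgc) hgpos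
  have hy : 1 ≤ d / g := Nat.div_pos (Nat.le_of_dvd (by omega) hgd) hgpos
  have := k4_helper m a b g (c/g) (d/g) hm hg3 hxy hL h2c' h2d' ham hbm hx hy
  omega

lemma k4_bound (m d1 d2 d3 d4 : ℕ) (hm : 1 ≤ m)
    (hv1 : d1 ∣ m) (hv2 : d2 ∣ m) (hv3 : d3 ∣ m) (hv4 : d4 ∣ m)
    (h21 : 2*d1 ≤ m) (h22 : 2*d2 ≤ m) (h23 : 2*d3 ≤ m) (h24 : 2*d4 ≤ m)
    (h11 : 1 ≤ d1) (h12 : 1 ≤ d2) (h13 : 1 ≤ d3) (h14 : 1 ≤ d4)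
    (hA : Nat.gcd d2 (Nat.gcd d1 d3) = 1)
    (hB : Nat.gcd d4 (Nat.gcd d1 d3) = 1)
    (hC : Nat.gcd d1 (Nat.gcd d2 d4) = 1)
    (hD : Nat.gcd d3 (Nat.gcd d2 d4) = 1) :
    2*(d1+d2+d3+d4) ≤ 3*m+6 := by
  by_cases h13c : Nat.gcd d1 d3 = 1
  · have := coprime_pair_bound m d1 d3 hm hv1 hv3 h21 h23 h11 h13 h13c
    omega
  by_cases h24c : Nat.gcd d2 d4 = 1
  · have := coprime_pair_bound m d2 d4 hm hv2 hv4 h22 h24 h12 h14 h24c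
    omega
  have hp13 : 0 < Nat.gcd d1 d3 := Nat.gcd_pos_of_pos_left _ (by omega)
  have hp24 : 0 < Nat.gcd d2 d4 := Nat.gcd_pos_of_pos_left _ (by omega)
  have hcop : Nat.gcd (Nat.gcd d1 d3) (Nat.gcd d2 d4) = 1 := by
    have h1 : Nat.gcd (Nat.gcd d1 d3) (Nat.gcd d2 d4) ∣ Nat.gcd d1 (Nat.gcd d2 d4) :=
      Nat.dvd_gcd ((Nat.gcd_dvd_left _ _).trans (Nat.gcd_dvd_left _ _)) (Nat.gcd_dvd_right _ _)
    rw [hC] at h1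
    exact Nat.dvd_one.mp h1
  rcases Nat.lt_or_ge (Nat.gcd d1 d3) 3 with hlt | hge
  · -- gcd d1 d3 = 2, hence gcd d2 d4 ≥ 3
    have hg2 : Nat.gcd d1 d3 = 2 := by omega
    have hge24 : 3 ≤ Nat.gcd d2 d4 := by
      rcases Nat.lt_or_ge (Nat.gcd d2 d4) 3 with hl | hg
      · have : Nat.gcd d2 d4 = 2 := by omega
        rw [hg2, this] at hcop
        simp at hcop
      · exact hg
    have := k4_pair m d1 d3 d2 d4 hm hv1 hv3 hv2 hv4 h22 h24 h12 h14 hge24 hC hD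
    omega
  · have := k4_pair m d2 d4 d1 d3 hm hv2 hv4 hv1 hv3 h21 h23 h11 h13 hge hA hB
    omega

lemma core_gcd_one (m k : ℕ) (o : Fin k → ℕ)
    (hgcd : Nat.gcd m (Finset.univ.gcd o) = 1) (g : ℕ) (hgm : g ∣ m)
    (hall : ∀ i, g ∣ o i) : g = 1 := by
  have h1 : g ∣ Finset.univ.gcd o := Finset.dvd_gcd (fun i _ => hall i)
  have h2 := Nat.dvd_gcd hgm h1
  rw [hgcd] at h2
  exact Nat.dvd_one.mp h2


/-- For a core with `χ ≤ 0`, one has `2 ≤ m ≤ 6 - 2χ`. -/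
theorem core_m_bound (m k : ℕ) (o : Fin k → ℕ) (h : IsCore m k o)
    (hchi : coreChi m k o ≤ 0) :
    2 ≤ m ∧ (m : ℤ) ≤ 6 - 2 * coreChi m k o := by
  obtain ⟨hm1, hrange, hsum, hgcd⟩ := h
  have hdvd : m ∣ ∑ i, o i := Nat.dvd_of_mod_eq_zero hsum
  -- basic facts about the gcds
  have hDdvd : ∀ i, Nat.gcd m (o i) ∣ m := fun i => Nat.gcd_dvd_left _ _
  have hDpos : ∀ i, 1 ≤ Nat.gcd m (o i) := fun i => Nat.gcd_pos_of_pos_left _ (by omega)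
  have hD2 : ∀ i, 2 * Nat.gcd m (o i) ≤ m := fun i =>
    two_mul_le_of_dvd _ _ (hDdvd i)
      (lt_of_le_of_lt (Nat.gcd_le_right _ (hrange i).1) (hrange i).2)
  have hDo : ∀ i, Nat.gcd m (o i) ∣ o i := fun i => Nat.gcd_dvd_right _ _
  have hm2 : 2 ≤ m := by
    by_contra hlt
    have hm1' : m = 1 := by omega
    subst hm1'
    rcases Nat.eq_zero_or_pos k with hk | hk
    · subst hk
      simp [coreChi] at hchi
    · have := hrange ⟨0, hk⟩
      omega
  refine ⟨hm2, ?_⟩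
  rcases Nat.lt_or_ge k 5 with hk5 | hk5
  · interval_cases k
    · -- k = 0
      exfalso
      simp [coreChi] at hchi
      omega
    · -- k = 1
      exfalso
      rw [Fin.sum_univ_one] at hdvd
      have h1 := Nat.le_of_dvd (by have := (hrange 0).1; omega) hdvd
      have h2 := (hrange 0).2
      omega
    · -- k = 2
      exfalso
      have hS : (∑ i, o i) = o 0 + o 1 := Fin.sum_univ_two o
      rw [hS] at hdvd
      have key : ∀ i : Fin 2, Nat.gcd m (o i) = 1 := by
        intro i
        apply core_gcd_one m 2 o hgcd _ (hDdvd i)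
        intro j
        have hgS : Nat.gcd m (o i) ∣ o 0 + o 1 := (hDdvd i).trans hdvd
        fin_cases i <;> fin_cases j
        · exact hDo 0
        · exact (Nat.dvd_add_right (hDo 0)).mp hgS
        · have : Nat.gcd m (o 1) ∣ o 0 + o 1 - o 1 := Nat.dvd_sub hgS (hDo 1)
          rwa [Nat.add_sub_cancel] at this
        · exact hDo 1
      have hchi' : coreChi m 2 o = 2 := by
        simp [coreChi, Fin.sum_univ_two, key 0, key 1]
      rw [hchi'] at hchi
      omega
    · -- k = 3
      have hS : (∑ i, o i) = o 0 + o 1 + o 2 := Fin.sum_univ_three o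
      rw [hS] at hdvd
      have pair : ∀ i j l : Fin 3, (∀ x : Fin 3, x = i ∨ x = j ∨ x = l) →
          o i + o j + o l = o 0 + o 1 + o 2 →
          Nat.gcd (Nat.gcd m (o i)) (Nat.gcd m (o j)) = 1 := by
        intro i j l hcov hperm
        set g := Nat.gcd (Nat.gcd m (o i)) (Nat.gcd m (o j)) with hgdef
        have hgm : g ∣ m := (Nat.gcd_dvd_left _ _).trans (hDdvd i)
        have hgi : g ∣ o i := (Nat.gcd_dvd_left _ _).trans (hDo i)
        have hgj : g ∣ o j := (Nat.gcd_dvd_right _ _).trans (hDo j)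
        have hgS : g ∣ o i + o j + o l := by rw [hperm]; exact hgm.trans hdvd
        have hgl : g ∣ o l := by
          have h' := Nat.dvd_sub (Nat.dvd_sub hgS hgj) hgi
          rwa [show o i + o j + o l - o j - o i = o l from by omega] at h'
        apply core_gcd_one m 3 o hgcd g hgm
        intro x
        rcases hcov x with hx | hx | hx <;> rw [hx] <;> assumption
      have h01 := pair 0 1 2 (by decide) (by ring)
      have h02 := pair 0 2 1 (by decide) (by ring)
      have h12 := pair 1 2 0 (by decide) (by ring)
      have key := k3_bound m (Nat.gcd m (o 0)) (Nat.gcd m (o 1)) (Nat.gcd m (o 2))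
        (by omega) (hDdvd 0) (hDdvd 1) (hDdvd 2) (hD2 0) (hD2 1) (hD2 2)
        (hDpos 0) (hDpos 1) (hDpos 2) h01 h02 h12
      have hchi' : coreChi m 3 o = (m:ℤ)*(2-3) +
          ((Nat.gcd m (o 0) : ℤ) + (Nat.gcd m (o 1) : ℤ) + (Nat.gcd m (o 2) : ℤ)) := by
        simp [coreChi, Fin.sum_univ_three]
      rw [hchi']
      push_cast
      push_cast at key
      linarith
    · -- k = 4
      have hS : (∑ i, o i) = o 0 + o 1 + o 2 + o 3 := Fin.sum_univ_four o
      rw [hS] at hdvd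
      have tri : ∀ i j l r : Fin 4, (∀ x : Fin 4, x = i ∨ x = j ∨ x = l ∨ x = r) →
          o i + o j + o l + o r = o 0 + o 1 + o 2 + o 3 →
          Nat.gcd (Nat.gcd m (o i)) (Nat.gcd (Nat.gcd m (o j)) (Nat.gcd m (o l))) = 1 := by
        intro i j l r hcov hperm
        set g := Nat.gcd (Nat.gcd m (o i)) (Nat.gcd (Nat.gcd m (o j)) (Nat.gcd m (o l)))
          with hgdef
        have hgm : g ∣ m := (Nat.gcd_dvd_left _ _).trans (hDdvd i)
        have hgi : g ∣ o i := (Nat.gcd_dvd_left _ _).trans (hDo i)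
        have hgj : g ∣ o j := ((Nat.gcd_dvd_right _ _).trans (Nat.gcd_dvd_left _ _)).trans (hDo j)
        have hgl : g ∣ o l := ((Nat.gcd_dvd_right _ _).trans (Nat.gcd_dvd_right _ _)).trans (hDo l)
        have hgS : g ∣ o i + o j + o l + o r := by rw [hperm]; exact hgm.trans hdvd
        have hgr : g ∣ o r := by
          have h' := Nat.dvd_sub (Nat.dvd_sub (Nat.dvd_sub hgS hgl) hgj) hgi
          rwa [show o i + o j + o l + o r - o l - o j - o i = o r from by omega] at h'
        apply core_gcd_one m 4 o hgcd g hgm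
        intro x
        rcases hcov x with hx | hx | hx | hx <;> rw [hx] <;> assumption
      have hA := tri 1 0 2 3 (by decide) (by ring)
      have hB := tri 3 0 2 1 (by decide) (by ring)
      have hC := tri 0 1 3 2 (by decide) (by ring)
      have hD := tri 2 1 3 0 (by decide) (by ring)
      have key := k4_bound m (Nat.gcd m (o 0)) (Nat.gcd m (o 1)) (Nat.gcd m (o 2))
        (Nat.gcd m (o 3)) (by omega) (hDdvd 0) (hDdvd 1) (hDdvd 2) (hDdvd 3)
        (hD2 0) (hD2 1) (hD2 2) (hD2 3) (hDpos 0) (hDpos 1) (hDpos 2) (hDpos 3)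
        hA hB hC hD
      have hchi' : coreChi m 4 o = (m:ℤ)*(2-4) +
          ((Nat.gcd m (o 0) : ℤ) + (Nat.gcd m (o 1) : ℤ) + (Nat.gcd m (o 2) : ℤ)
            + (Nat.gcd m (o 3) : ℤ)) := by
        simp [coreChi, Fin.sum_univ_four]
      rw [hchi']
      push_cast
      push_cast at key
      linarith
  · -- k ≥ 5
    have hsum2 : 2 * (∑ i, Nat.gcd m (o i)) ≤ k * m := by
      calc 2 * (∑ i, Nat.gcd m (o i)) = ∑ i, 2 * Nat.gcd m (o i) := by
            rw [Finset.mul_sum]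
        _ ≤ ∑ _i : Fin k, m := Finset.sum_le_sum (fun i _ => hD2 i)
        _ = k * m := by simp [Finset.sum_const, Finset.card_univ, Nat.smul_one_eq_cast]
    have hcast : ((∑ i, Nat.gcd m (o i) : ℕ) : ℤ) = ∑ i, (Nat.gcd m (o i) : ℤ) :=
      Nat.cast_sum _ _
    have h5m : (5:ℤ) * m ≤ (k:ℤ) * m := by
      have : (5:ℤ) ≤ (k:ℤ) := by exact_mod_cast hk5
      have hm0 : (0:ℤ) ≤ m := by positivity
      nlinarith
    have hsum2' : 2 * ((∑ i, Nat.gcd m (o i) : ℕ) : ℤ) ≤ (k:ℤ) * m := by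
      exact_mod_cast hsum2
    rw [hcast] at hsum2'
    show (m:ℤ) ≤ 6 - 2 * ((m : ℤ) * (2 - (k : ℤ)) + ∑ i, (Nat.gcd m (o i) : ℤ))
    have hm0 : (2:ℤ) ≤ m := by exact_mod_cast hm2
    nlinarith [hsum2', h5m]
end

section
/- For every integer B ≤ 0, there are only finitely many cores Ψ with χ(Ψ) = B. -/
lemma div_step (d m j : ℕ) (hd : d ∣ m) (h : j * d < m) : (j + 1) * d ≤ m := by
  obtain ⟨q, rfl⟩ := hd
  have hd0 : 0 < d := by
    rcases Nat.eq_zero_or_pos d with h0 | h0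
    · simp [h0] at h
    · exact h0
  have h' : d * j < d * q := by rw [mul_comm d j]; exact h
  have hq : j < q := Nat.lt_of_mul_lt_mul_left h' 
  calc (j + 1) * d = d * (j + 1) := by ring
    _ ≤ d * q := Nat.mul_le_mul_left d hq

lemma key3 (m n d1 d2 d3 : ℕ) (h1 : d1 ∣ m) (h2 : d2 ∣ m) (h3 : d3 ∣ m)
    (hp : 1 ≤ d3) (h32 : d3 ≤ d2) (h21 : d2 ≤ d1) (hle : 2 * d1 ≤ m)
    (hsum : d1 + d2 + d3 + n = m)
    (hg : ∀ e, e ∣ d1 → e ∣ d2 → e ∣ d3 → e = 1) :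
    m ≤ 42 * n + 42 := by
  rcases eq_or_lt_of_le hle with heq1 | hlt1
  · -- 2 d1 = m
    have h2d2lt : 2 * d2 < m := by omega
    have h3d2 : 3 * d2 ≤ m := div_step d2 m 2 h2 h2d2lt
    rcases eq_or_lt_of_le h3d2 with heq2 | hlt2
    · -- 3 d2 = m
      have h6 : 6 * d3 + 6 * n = m := by omega
      rcases Nat.eq_zero_or_pos n with hn | hn
      · have hd1 : d1 = d3 * 3 := by omega
        have hd2 : d2 = d3 * 2 := by omega
        have := hg d3 ⟨3, hd1⟩ ⟨2, hd2⟩ dvd_rfl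
        omega
      · have h7 : 7 * d3 ≤ m := div_step d3 m 6 h3 (by omega)
        omega
    · have h4d2 : 4 * d2 ≤ m := div_step d2 m 3 h2 hlt2
      rcases eq_or_lt_of_le h4d2 with heq2 | hlt2'
      · -- 4 d2 = m
        rcases Nat.eq_zero_or_pos n with hn | hn
        · have hd1 : d1 = d3 * 2 := by omega
          have hd2 : d2 = d3 * 1 := by omega
          have := hg d3 ⟨2, hd1⟩ ⟨1, hd2⟩ dvd_rfl
          omega
        · have h5 : 5 * d3 ≤ m := div_step d3 m 4 h3 (by omega)
          omega
      · have h5d2 : 5 * d2 ≤ m := div_step d2 m 4 h2 hlt2'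
        omega
  · -- 2 d1 < m
    have h3d1 : 3 * d1 ≤ m := div_step d1 m 2 h1 hlt1
    rcases eq_or_lt_of_le h3d1 with heq1' | hlt1'
    · -- 3 d1 = m
      have h3d2 : 3 * d2 ≤ m := by omega
      rcases eq_or_lt_of_le h3d2 with heq2 | hlt2
      · rcases Nat.eq_zero_or_pos n with hn | hn
        · have hd1 : d1 = d3 * 1 := by omega
          have hd2 : d2 = d3 * 1 := by omega
          have := hg d3 ⟨1, hd1⟩ ⟨1, hd2⟩ dvd_rfl
          omega
        · have h4 : 4 * d3 ≤ m := div_step d3 m 3 h3 (by omega)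
          omega
      · have h4d2 : 4 * d2 ≤ m := div_step d2 m 3 h2 hlt2
        omega
    · have h4d1 : 4 * d1 ≤ m := div_step d1 m 3 h1 hlt1'
      omega

lemma key3s (m n d1 d2 d3 : ℕ) (h1 : d1 ∣ m) (h2 : d2 ∣ m) (h3 : d3 ∣ m)
    (hp1 : 1 ≤ d1) (hp2 : 1 ≤ d2) (hp3 : 1 ≤ d3)
    (hle1 : 2 * d1 ≤ m) (hle2 : 2 * d2 ≤ m) (hle3 : 2 * d3 ≤ m)
    (hsum : d1 + d2 + d3 + n = m)
    (hg : ∀ e, e ∣ d1 → e ∣ d2 → e ∣ d3 → e = 1) :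
    m ≤ 42 * n + 42 := by
  rcases le_total d1 d2 with a | a <;> rcases le_total d2 d3 with b | b <;>
    rcases le_total d1 d3 with c | c
  · exact key3 m n d3 d2 d1 h3 h2 h1 hp1 a b hle3 (by omega) (fun e x y z => hg e z y x)
  · exact key3 m n d3 d2 d1 h3 h2 h1 hp1 a b hle3 (by omega) (fun e x y z => hg e z y x)
  · exact key3 m n d2 d3 d1 h2 h3 h1 hp1 c b hle2 (by omega) (fun e x y z => hg e z x y)
  · exact key3 m n d2 d1 d3 h2 h1 h3 hp3 c a hle2 (by omega) (fun e x y z => hg e y x z)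
  · exact key3 m n d3 d1 d2 h3 h1 h2 hp2 a c hle3 (by omega) (fun e x y z => hg e y z x)
  · exact key3 m n d1 d3 d2 h1 h3 h2 hp2 (by omega) (by omega) hle1 (by omega) (fun e x y z => hg e x z y)
  · exact key3 m n d1 d2 d3 h1 h2 h3 hp3 b a hle1 hsum hg
  · exact key3 m n d1 d2 d3 h1 h2 h3 hp3 b a hle1 hsum hg

/-- A core as an unordered multiset: `m ≥ 1` together with a multiset `s` of residues
with representatives in `{1,...,m-1}`, summing to `0` mod `m`, with
`gcd(m, o_1, ..., o_k) = 1`. -/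
def IsCoreM (m : ℕ) (s : Multiset ℕ) : Prop :=
  1 ≤ m ∧ (∀ x ∈ s, 1 ≤ x ∧ x < m) ∧ s.sum % m = 0 ∧ Nat.gcd m s.gcd = 1

/-- The Euler characteristic `χ(Ψ) = m(2-k) + Σ gcd(m, o_i)` of a core. -/
def chiM (m : ℕ) (s : Multiset ℕ) : ℤ :=
  (m : ℤ) * (2 - (Multiset.card s : ℤ)) + (s.map (fun x => (Nat.gcd m x : ℤ))).sum

lemma core_bound_s15 (B : ℤ) (hB : B ≤ 0) (m : ℕ) (s : Multiset ℕ)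
    (hc : IsCoreM m s) (hχ : chiM m s = B) :
    m ≤ 42 * (-B).toNat + 42 ∧ Multiset.card s ≤ 5 * (-B).toNat + 4 := by
  obtain ⟨hm1, hmem, hsum, hgcd⟩ := hc
  set n := (-B).toNat with hn
  have hnB : (n : ℤ) = -B := Int.toNat_of_nonneg (by omega)
  set k := Multiset.card s with hk
  set D := (s.map (fun x => Nat.gcd m x)).sum with hD
  -- basic facts about gcds
  have hfac : ∀ x ∈ s, Nat.gcd m x ∣ m ∧ 1 ≤ Nat.gcd m x ∧ 2 * Nat.gcd m x ≤ m := by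
    intro x hx
    obtain ⟨hx1, hx2⟩ := hmem x hx
    refine ⟨Nat.gcd_dvd_left m x, Nat.pos_of_ne_zero fun h => by
      have := Nat.eq_zero_of_gcd_eq_zero_left h; omega, ?_⟩
    have hdx : Nat.gcd m x ∣ x := Nat.gcd_dvd_right m x
    have hlt : Nat.gcd m x < m := lt_of_le_of_lt (Nat.le_of_dvd (by omega) hdx) hx2
    have := div_step (Nat.gcd m x) m 1 (Nat.gcd_dvd_left m x) (by omega)
    omega
  -- the fundamental equation in ℕ
  have hEq : D + 2 * m + n = k * m := by
    have : ((D + 2 * m + n : ℕ) : ℤ) = ((k * m : ℕ) : ℤ) := by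
      unfold chiM at hχ
      have hcast : (s.map (fun x => ((Nat.gcd m x : ℕ) : ℤ))).sum = ((D : ℕ) : ℤ) := by
        rw [hD]; push_cast; rw [Multiset.map_map]; rfl
      rw [hcast] at hχ
      push_cast
      linear_combination hχ + hnB
    exact_mod_cast this
  have h2D : 2 * D ≤ k * m := by
    have : (s.map (fun x => 2 * Nat.gcd m x)).sum ≤ (s.map (fun _ => m)).sum :=
      Multiset.sum_map_le_sum_map _ _ (fun x hx => by have := (hfac x hx).2.2; omega)
    have hl : (s.map (fun x => 2 * Nat.gcd m x)).sum = 2 * D := by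
      rw [hD, ← Multiset.sum_map_mul_left]
    have hr : (s.map (fun _ : ℕ => m)).sum = k * m := by
      simp [Multiset.map_const', hk]
    rw [hl, hr] at this
    exact this
  -- case on k
  rcases Nat.lt_or_ge k 5 with hk5 | hk5
  · interval_cases k
    · -- k = 0
      exfalso
      have : Multiset.card s = 0 := hk.symm
      have hs0 : s = 0 := Multiset.card_eq_zero.mp this
      rw [hs0] at hD
      simp at hD
      omega
    · -- k = 1
      exfalso
      obtain ⟨a, ha⟩ := Multiset.card_eq_one.mp hk.symm
      obtain ⟨ha1, ha2⟩ := hmem a (by simp [ha])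
      rw [ha] at hsum
      simp at hsum
      omega
    · -- k = 2 : D + n = 0 but D ≥ 2
      exfalso
      obtain ⟨a, b, hab⟩ := Multiset.card_eq_two.mp hk.symm
      have hDv : D = Nat.gcd m a + Nat.gcd m b := by rw [hD, hab]; simp
      have h1 := (hfac a (by simp [hab])).2.1
      omega
    · -- k = 3
      obtain ⟨a, b, c, habc⟩ := Multiset.card_eq_three.mp hk.symm
      have hDv : D = Nat.gcd m a + Nat.gcd m b + Nat.gcd m c := by
        rw [hD, habc]; simp; ring
      have ha := hfac a (by simp [habc])
      have hb := hfac b (by simp [habc])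
      have hcc := hfac c (by simp [habc])
      have hgg : ∀ e, e ∣ Nat.gcd m a → e ∣ Nat.gcd m b → e ∣ Nat.gcd m c → e = 1 := by
        intro e ea eb ec
        have hem : e ∣ m := ea.trans (Nat.gcd_dvd_left m a)
        have hes : e ∣ s.gcd := by
          rw [habc]
          exact Multiset.dvd_gcd.mpr (by
            intro x hx
            simp only [Multiset.insert_eq_cons, Multiset.mem_cons, Multiset.mem_singleton] at hx
            rcases hx with rfl | rfl | rfl
            · exact ea.trans (Nat.gcd_dvd_right _ _)
            · exact eb.trans (Nat.gcd_dvd_right _ _)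
            · exact ec.trans (Nat.gcd_dvd_right _ _))
        have : e ∣ Nat.gcd m s.gcd := Nat.dvd_gcd hem hes
        rw [hgcd] at this
        exact Nat.dvd_one.mp this
      have := key3s m n (Nat.gcd m a) (Nat.gcd m b) (Nat.gcd m c)
        ha.1 hb.1 hcc.1 ha.2.1 hb.2.1 hcc.2.1 ha.2.2 hb.2.2 hcc.2.2 (by omega) hgg
      omega
    · -- k = 4
      constructor
      · by_cases hall : ∀ x ∈ s, 2 * Nat.gcd m x = m
        · -- all gcds are m/2
          have hex : ∃ x, x ∈ s := Multiset.card_pos_iff_exists_mem.mp (by omega)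
          obtain ⟨x0, hx0⟩ := hex
          set c := Nat.gcd m x0 with hcdef
          have hc2 : 2 * c = m := hall x0 hx0
          have hcm : c ∣ m := (hfac x0 hx0).1
          have hcs : c ∣ s.gcd := Multiset.dvd_gcd.mpr (by
            intro x hx
            have : Nat.gcd m x = c := by have := hall x hx; omega
            rw [← this]; exact Nat.gcd_dvd_right m x)
          have : c ∣ Nat.gcd m s.gcd := Nat.dvd_gcd hcm hcs
          rw [hgcd] at this
          have := Nat.dvd_one.mp this
          omega
        · push_neg at hall
          obtain ⟨x, hx, hxne⟩ := hall
          have hfx := hfac x hx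
          have h3x : 3 * Nat.gcd m x ≤ m := div_step _ m 2 hfx.1 (by omega)
          obtain ⟨t, ht⟩ := Multiset.exists_cons_of_mem hx
          have hDt : D = Nat.gcd m x + (t.map (fun y => Nat.gcd m y)).sum := by
            rw [hD, ht]; simp
          have hcardt : Multiset.card t = 3 := by
            have : Multiset.card s = Multiset.card t + 1 := by rw [ht]; simp
            omega
          have h2t : 2 * (t.map (fun y => Nat.gcd m y)).sum ≤ 3 * m := by
            have hle : (t.map (fun y => 2 * Nat.gcd m y)).sum ≤ (t.map (fun _ => m)).sum :=
              Multiset.sum_map_le_sum_map _ _ (fun y hy => by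
                have := (hfac y (by rw [ht]; exact Multiset.mem_cons_of_mem hy)).2.2
                omega)
            have hl : (t.map (fun y => 2 * Nat.gcd m y)).sum
                = 2 * (t.map (fun y => Nat.gcd m y)).sum := by
              rw [← Multiset.sum_map_mul_left]
            have hr : (t.map (fun _ : ℕ => m)).sum = 3 * m := by
              simp [Multiset.map_const', hcardt]; omega
            rw [hl, hr] at hle
            exact hle
          -- 6D ≤ 2m + 9m = 11m ; D + n = 2m  →  m ≤ 6n
          omega
      · omega
  · -- k ≥ 5
    have h5m : 5 * m ≤ k * m := Nat.mul_le_mul_right m hk5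
    have hm2 : 2 ≤ m := by
      obtain ⟨x0, hx0⟩ := Multiset.card_pos_iff_exists_mem.mp (show 0 < Multiset.card s by omega)
      have := hmem x0 hx0
      omega
    have hmn : m ≤ 2 * n := by omega
    have h2k : k * 2 ≤ k * m := Nat.mul_le_mul_left k hm2
    have : k * 2 ≤ 4 * m + 2 * n := by omega
    constructor
    · omega
    · omega


/-- For every `B ≤ 0` there are only finitely many cores with `χ = B`. -/
theorem finitely_many_cores (B : ℤ) (hB : B ≤ 0) :
    {p : ℕ × Multiset ℕ | IsCoreM p.1 p.2 ∧ chiM p.1 p.2 = B}.Finite := by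
  set n := (-B).toNat with hn
  set M := 42 * n + 42 with hM
  set K := 5 * n + 4 with hK
  classical
  apply Set.Finite.subset
    (Finset.finite_toSet ((Finset.range (M + 1)) ×ˢ ((K • Multiset.range M).powerset.toFinset)))
  rintro ⟨m, s⟩ ⟨hc, hχ⟩
  obtain ⟨hmB, hsB⟩ := core_bound_s15 B hB m s hc hχ
  simp only [Finset.coe_product, Set.mem_prod, Finset.mem_coe, Finset.mem_range,
    Multiset.mem_toFinset, Multiset.mem_powerset]
  constructor
  · omega
  · rw [Multiset.le_iff_count]
    intro a
    rw [Multiset.count_nsmul]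
    by_cases ha : a ∈ s
    · have haM : a < M := by
        have := hc.2.1 a ha
        omega
      have h1 : Multiset.count a (Multiset.range M) = 1 :=
        Multiset.count_eq_one_of_mem (Multiset.nodup_range M) (Multiset.mem_range.mpr haM)
      rw [h1]
      have := Multiset.count_le_card a s
      omega
    · simp [Multiset.count_eq_zero.mpr ha]
end

section
/- Let m_1 ≤ m_2 ≤ m_3 be integers ≥ 2 such that 1/m_1 + 1/m_2 + 1/m_3 ≥ 1 and such that every prime power dividing one of the m_i divides at least two of them. Then (m_1,m_2,m_3) is one of (2,2,2), (2,3,6), (2,4,4), (3,3,3). -/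
/-- Classification of parabolic/spherical triples satisfying the prime power condition. -/
theorem triple_classification (m₁ m₂ m₃ : ℕ)
    (h₁ : 2 ≤ m₁) (h₁₂ : m₁ ≤ m₂) (h₂₃ : m₂ ≤ m₃)
    (hsum : 1 ≤ (1 : ℚ) / m₁ + 1 / m₂ + 1 / m₃)
    (hpp : ∀ p a : ℕ, p.Prime → 1 ≤ a →
      (p ^ a ∣ m₁ ∨ p ^ a ∣ m₂ ∨ p ^ a ∣ m₃) →
      ((p ^ a ∣ m₁ ∧ p ^ a ∣ m₂) ∨ (p ^ a ∣ m₁ ∧ p ^ a ∣ m₃) ∨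
        (p ^ a ∣ m₂ ∧ p ^ a ∣ m₃))) :
    (m₁, m₂, m₃) = (2, 2, 2) ∨ (m₁, m₂, m₃) = (2, 3, 6) ∨
      (m₁, m₂, m₃) = (2, 4, 4) ∨ (m₁, m₂, m₃) = (3, 3, 3) := by
  have hm₂ : 2 ≤ m₂ := le_trans h₁ h₁₂
  have hm₃ : 2 ≤ m₃ := le_trans hm₂ h₂₃
  -- helper for bounding reciprocals
  simp only [one_div] at hsum
  have key : ∀ n k : ℕ, 1 ≤ k → k ≤ n → ((n : ℚ))⁻¹ ≤ ((k : ℚ))⁻¹ := by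
    intro n k hk hkn
    rw [← one_div, ← one_div]
    apply one_div_le_one_div_of_le
    · exact_mod_cast hk
    · exact_mod_cast hkn
  have h1 : m₁ ≤ 3 := by
    by_contra h
    push_neg at h
    have a1 : ((m₁ : ℚ))⁻¹ ≤ (4 : ℚ)⁻¹ := key m₁ 4 (by norm_num) h
    have a2 : ((m₂ : ℚ))⁻¹ ≤ (4 : ℚ)⁻¹ := key m₂ 4 (by norm_num) (le_trans h h₁₂)
    have a3 : ((m₃ : ℚ))⁻¹ ≤ (4 : ℚ)⁻¹ := key m₃ 4 (by norm_num) (le_trans (le_trans h h₁₂) h₂₃)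
    linarith
  interval_cases m₁
  · -- m₁ = 2
    have h2 : m₂ ≤ 4 := by
      by_contra h
      push_neg at h
      have a2 : ((m₂ : ℚ))⁻¹ ≤ (5 : ℚ)⁻¹ := key m₂ 5 (by norm_num) h
      have a3 : ((m₃ : ℚ))⁻¹ ≤ (5 : ℚ)⁻¹ := key m₃ 5 (by norm_num) (le_trans h h₂₃)
      norm_num at hsum
      linarith
    interval_cases m₂
    · -- (2, 2, m₃) : every prime power dividing m₃ divides 2
      have : m₃ ∣ 2 := by
        rw [Nat.dvd_iff_prime_pow_dvd_dvd]
        intro p k hp hpk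
        rcases Nat.eq_zero_or_pos k with rfl | hk
        · simp
        · rcases hpp p k (hp) hk (Or.inr (Or.inr hpk)) with
            ⟨h, _⟩ | ⟨h, _⟩ | ⟨h, _⟩
          · exact h
          · exact h
          · exact h
      have h2' := Nat.le_of_dvd (by norm_num) this
      have : m₃ = 2 := le_antisymm h2' hm₃
      subst this
      left; rfl
    · -- (2, 3, m₃)
      have h3 : m₃ ≤ 6 := by
        by_contra h
        push_neg at h
        have a3 : ((m₃ : ℚ))⁻¹ ≤ (7 : ℚ)⁻¹ := key m₃ 7 (by norm_num) h
        norm_num at hsum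
        linarith
      interval_cases m₃
      · have := hpp 2 1 Nat.prime_two le_rfl (Or.inl (by norm_num))
        norm_num at this
      · have := hpp 2 2 Nat.prime_two (by norm_num) (Or.inr (Or.inr (by norm_num)))
        norm_num at this
      · have := hpp 5 1 (by norm_num) le_rfl (Or.inr (Or.inr (by norm_num)))
        norm_num at this
      · right; left; rfl
    · -- (2, 4, m₃)
      have h3 : m₃ ≤ 4 := by
        by_contra h
        push_neg at h
        have a3 : ((m₃ : ℚ))⁻¹ ≤ (5 : ℚ)⁻¹ := key m₃ 5 (by norm_num) h
        norm_num at hsum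
        linarith
      interval_cases m₃
      · right; right; left; rfl
  · -- m₁ = 3
    have h2 : m₂ ≤ 3 := by
      by_contra h
      push_neg at h
      have a2 : ((m₂ : ℚ))⁻¹ ≤ (4 : ℚ)⁻¹ := key m₂ 4 (by norm_num) h
      have a3 : ((m₃ : ℚ))⁻¹ ≤ (4 : ℚ)⁻¹ := key m₃ 4 (by norm_num) (le_trans h h₂₃)
      norm_num at hsum
      linarith
    have h3 : m₃ ≤ 3 := by
      by_contra h
      push_neg at h
      have a3 : ((m₃ : ℚ))⁻¹ ≤ (4 : ℚ)⁻¹ := key m₃ 4 (by norm_num) h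
      norm_num at hsum
      linarith [key m₂ 3 (by norm_num) h₁₂]
    interval_cases m₂
    interval_cases m₃
    right; right; right; rfl
end

section
/- If p is prime and k ≥ 3, the number of multisets {o_1,...,o_k} of elements of (Z/pZ) \ {0} with o_1 + ... + o_k ≡ 0 (mod p) equals (1/p)(C(p+k-2, k) + (p-1)δ(k)), where δ(k) = 1 if k ≡ 0 mod p, δ(k) = -1 if k ≡ 1 mod p, and δ(k) = 0 otherwise. -/
/-!
Count with additive characters: `p · N = ∑_ψ ∑_m ψ(∑ m)`, the inner sum running over the
multisets `m` of size `k` of nonzero residues. The inner sum is the complete homogeneous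
symmetric polynomial `h_k` evaluated at the values `ψ a`, `a ≠ 0`, whose generating function is
`∏_{a ≠ 0} (1 - ψ(a) X)⁻¹`. For `ψ = 0` this counts the multisets, `C(p + k - 2, k)`. For each of
the `p - 1` nontrivial `ψ` the values `ψ a`, `a ∈ ZMod p`, are all the `p`-th roots of unity, so
`∏_{a ≠ 0} (1 - ψ(a) X) = (1 - X^p) / (1 - X)` and `h_k = δ(k)`, the `k`-th coefficient of
`(1 - X) / (1 - X^p)`.
-/

open Finset PowerSeries

section Sym

variable {ι : Type*} [DecidableEq ι]

theorem Finset.sum_sym_eq_sum_finsuppAntidiag {M : Type*} [AddCommMonoid M]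
    (s : Finset ι) (n : ℕ) (g : Multiset ι → M) :
    ∑ m ∈ s.sym n, g m = ∑ l ∈ s.finsuppAntidiag n, g (Finsupp.toMultiset l) := by
  have hcard : ∀ l ∈ s.finsuppAntidiag n, Multiset.card (Finsupp.toMultiset l) = n := by
    intro l hl
    rw [mem_finsuppAntidiag] at hl
    rw [Finsupp.card_toMultiset, Finsupp.sum_of_support_subset l hl.2 _ (fun _ _ => rfl), ← hl.1]
    rfl
  refine Finset.sum_bij' (fun m _ => Multiset.toFinsupp m.1)
    (fun l hl => Sym.mk (Finsupp.toMultiset l) (hcard l hl)) (fun m hm => ?_) (fun l hl => ?_)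
    (fun m _ => Sym.ext (Multiset.toFinsupp_toMultiset _)) (fun l _ => by simp)
    (fun m _ => by rw [Multiset.toFinsupp_toMultiset]; rfl)
  · rw [mem_sym_iff] at hm
    rw [mem_finsuppAntidiag]
    exact ⟨(Multiset.sum_count_eq_card hm).trans m.2,
      fun a ha => hm a (Multiset.mem_toFinset.1 ha)⟩
  · rw [mem_finsuppAntidiag] at hl
    rw [mem_sym_iff]
    exact fun a ha => hl.2 ((Finsupp.mem_toMultiset l a).1 ((Sym.mem_mk _ _ _).1 ha))

theorem Finset.card_sym (s : Finset ι) (n : ℕ) : #(s.sym n) = (#s + n - 1).choose n := by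
  rw [card_eq_sum_ones, sum_sym_eq_sum_finsuppAntidiag s n fun _ => 1, ← card_eq_sum_ones,
    card_finsuppAntidiag_nat_eq_choose]

theorem PowerSeries.mk_sum_sym_prod_map {R : Type*} [CommSemiring R] (s : Finset ι) (f : ι → R) :
    mk (fun n => ∑ m ∈ s.sym n, ((m : Multiset ι).map f).prod) = ∏ i ∈ s, mk fun n => f i ^ n := by
  ext d
  rw [coeff_mk, coeff_prod, sum_sym_eq_sum_finsuppAntidiag s d fun m => (m.map f).prod]
  refine Finset.sum_congr rfl fun l hl => ?_
  rw [mem_finsuppAntidiag] at hl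
  simp only [coeff_mk, Finset.prod_multiset_map_count, Finsupp.toFinset_toMultiset,
    Finsupp.count_toMultiset]
  exact Finset.prod_subset hl.2 fun a _ ha => by rw [Finsupp.notMem_support_iff.1 ha, pow_zero]

end Sym

theorem Set.ncard_setOf_multiset_eq_card_filter_sym {α : Type*} [Fintype α] [DecidableEq α]
    (q : α → Prop) [DecidablePred q] (P : Multiset α → Prop) [DecidablePred P] (k : ℕ) :
    {s : Multiset α | Multiset.card s = k ∧ (∀ x ∈ s, q x) ∧ P s}.ncard =
      #((({x | q x} : Finset α).sym k).filter fun m : Sym α k => P m) := by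
  rw [← Set.ncard_coe_finset, ← Set.ncard_image_of_injective _ Sym.coe_injective]
  congr 1
  ext s
  simp only [Set.mem_ofPred_eq, coe_filter, Set.mem_image, mem_sym_iff, mem_filter_univ]
  constructor
  · rintro ⟨hk, hq, hP⟩
    exact ⟨⟨s, hk⟩, ⟨hq, hP⟩, rfl⟩
  · rintro ⟨m, ⟨hq, hP⟩, rfl⟩
    exact ⟨m.2, hq, hP⟩

theorem PowerSeries.mk_pow_mul_one_sub_C_mul_X {R : Type*} [CommRing R] (c : R) :
    mk (fun n => c ^ n) * (1 - C c * X) = 1 := by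
  simpa [rescale_mk, rescale_X] using congrArg (rescale c) (mk_one_mul_one_sub_eq_one R)

theorem PowerSeries.coeff_eq_of_mul_one_sub_X_pow_eq_one_sub_X {R : Type*} [CommRing R]
    {p : ℕ} (hp : 2 ≤ p) {H : R⟦X⟧} (h : H * (1 - X ^ p) = 1 - X) (n : ℕ) :
    coeff n H = if n % p = 0 then 1 else if n % p = 1 then -1 else 0 := by
  induction n using Nat.strong_induction_on with
  | _ n ih =>
    have hn := congrArg (coeff n) h
    rw [mul_sub, mul_one, map_sub, coeff_mul_X_pow', map_sub, coeff_one, coeff_X] at hn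
    by_cases hpn : p ≤ n
    · rw [if_pos hpn, ih (n - p) (by omega), ← Nat.mod_eq_sub_mod hpn,
        if_neg (show n ≠ 0 by omega), if_neg (show n ≠ 1 by omega), sub_zero, sub_eq_zero] at hn
      exact hn
    · rw [if_neg hpn, sub_zero] at hn
      rw [hn, Nat.mod_eq_of_lt (by omega)]
      rcases n with _ | _ | n <;> simp

namespace AddChar

theorem map_multiset_sum {A M : Type*} [AddCommMonoid A] [CommMonoid M]
    (ψ : AddChar A M) (s : Multiset A) : ψ s.sum = (s.map ψ).prod := by
  induction s using Multiset.induction_on with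
  | empty => simp
  | cons a s ih => rw [Multiset.sum_cons, map_add_eq_mul, ih, Multiset.map_cons, Multiset.prod_cons]

theorem card_mul_card_filter_eq_zero {G ι : Type*} [AddCommGroup G] [Fintype G]
    [DecidableEq G] (s : Finset ι) (g : ι → G) :
    (Fintype.card G : ℂ) * #{i ∈ s | g i = 0} = ∑ ψ : AddChar G ℂ, ∑ i ∈ s, ψ (g i) := by
  simp_rw [Finset.sum_comm (s := univ), sum_apply_eq_ite, Finset.sum_ite, sum_const_zero,
    add_zero, sum_const, nsmul_eq_mul, mul_comm]

theorem zmod_apply_eq_pow_val {n : ℕ} [NeZero n] {M : Type*} [Monoid M]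
    (ψ : AddChar (ZMod n) M) (a : ZMod n) : ψ a = ψ 1 ^ a.val := by
  rw [← map_nsmul_eq_pow, nsmul_one, ZMod.natCast_zmod_val]

variable {p : ℕ} [hp : Fact p.Prime]

theorem isPrimitiveRoot_apply_one {M : Type*} [CommMonoid M] {ψ : AddChar (ZMod p) M}
    (hψ : ψ ≠ 0) : IsPrimitiveRoot (ψ 1) p := by
  refine IsPrimitiveRoot.iff_orderOf.2 (orderOf_eq_prime ?_ ((zmod_char_ne_one_iff p ψ).1 hψ))
  rw [← map_nsmul_eq_pow, nsmul_eq_mul, mul_one, ZMod.natCast_self, map_zero_eq_one]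

variable {R : Type*} [CommRing R] [IsDomain R] {ψ : AddChar (ZMod p) R}

theorem prod_one_sub_C_mul_X (hψ : ψ ≠ 0) : ∏ a, (1 - C (ψ a) * X : R⟦X⟧) = 1 - X ^ p := by
  have hζ := isPrimitiveRoot_apply_one hψ
  have hCζ : IsPrimitiveRoot (C (ψ 1) : R⟦X⟧) p := hζ.map_of_injective C_injective
  rw [show (1 - X ^ p : R⟦X⟧) = 1 ^ p - X ^ p by rw [one_pow],
    hCζ.pow_sub_pow_eq_prod_sub_mul 1 X hp.out.pos]
  refine Finset.prod_nbij (fun a => C (ψ a)) (fun a _ => ?_) (fun a _ b _ hab => ?_)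
    (fun z hz => ?_) (fun _ _ => by rw [mul_comm])
  · rw [Polynomial.mem_nthRootsFinset hp.out.pos, ← map_pow, ← map_nsmul_eq_pow, nsmul_eq_mul,
      ZMod.natCast_self, zero_mul, map_zero_eq_one, map_one]
  · rw [C_injective.eq_iff, zmod_apply_eq_pow_val ψ a, zmod_apply_eq_pow_val ψ b] at hab
    exact ZMod.val_injective p (hζ.pow_inj (ZMod.val_lt a) (ZMod.val_lt b) hab)
  · rw [mem_coe, Polynomial.mem_nthRootsFinset hp.out.pos] at hz
    obtain ⟨i, -, rfl⟩ := hCζ.eq_pow_of_pow_eq_one hz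
    exact ⟨i, mem_coe.2 (mem_univ _), by rw [← map_pow, ← map_nsmul_eq_pow, nsmul_one]⟩

theorem sum_sym_apply_sum_of_ne_zero (hψ : ψ ≠ 0) (n : ℕ) :
    ∑ m ∈ ({x | x ≠ 0} : Finset (ZMod p)).sym n, ψ (m : Multiset (ZMod p)).sum =
      if n % p = 0 then 1 else if n % p = 1 then -1 else 0 := by
  set H : R⟦X⟧ := PowerSeries.mk fun n => ∑ m ∈ ({x | x ≠ 0} : Finset (ZMod p)).sym n,
    ψ (m : Multiset (ZMod p)).sum
  have hH : H * ∏ a ∈ ({x | x ≠ 0} : Finset (ZMod p)), (1 - C (ψ a) * X) = 1 := by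
    simp_rw [H, map_multiset_sum, mk_sum_sym_prod_map, ← prod_mul_distrib,
      mk_pow_mul_one_sub_C_mul_X, prod_const_one]
  have h : H * (1 - X ^ p) = 1 - X := by
    rw [← prod_one_sub_C_mul_X hψ, ← prod_filter_mul_prod_filter_not univ (· ≠ 0), ← mul_assoc,
      hH, one_mul]
    simp [filter_eq']
  simpa [H] using coeff_eq_of_mul_one_sub_X_pow_eq_one_sub_X hp.out.two_le h n

end AddChar

theorem card_mul_card_sym_nonzero_sum_eq_zero (p k : ℕ) [hp : Fact p.Prime] :
    (p : ℂ) * #((({x | x ≠ 0} : Finset (ZMod p)).sym k).filter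
        fun m : Sym (ZMod p) k => (m : Multiset (ZMod p)).sum = 0) =
      (p + k - 2).choose k + (p - 1) * (if k % p = 0 then 1 else if k % p = 1 then -1 else 0) := by
  have h := AddChar.card_mul_card_filter_eq_zero (({x | x ≠ 0} : Finset (ZMod p)).sym k)
    fun m => (m : Multiset (ZMod p)).sum
  rw [ZMod.card] at h
  rw [h, ← add_sum_erase _ _ (mem_univ 0),
    sum_congr rfl fun ψ hψ => AddChar.sum_sym_apply_sum_of_ne_zero (ne_of_mem_erase hψ) k]
  simp only [AddChar.zero_apply, sum_const, card_erase_of_mem (mem_univ _), card_univ,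
    AddChar.card_eq, ZMod.card, Finset.card_sym, filter_ne', nsmul_eq_mul, mul_one]
  have := hp.out.two_le
  rw [show p - 1 + k - 1 = p + k - 2 by omega, Nat.cast_sub (by omega : 1 ≤ p), Nat.cast_one]

theorem count_zero_sum_multisets_general (p k : ℕ) (hp : p.Prime) :
    (({s : Multiset (ZMod p) | Multiset.card s = k ∧ (∀ x ∈ s, x ≠ 0) ∧ s.sum = 0}.ncard : ℚ)) =
      (1 / (p : ℚ)) * (((p + k - 2).choose k : ℚ) +
        ((p : ℚ) - 1) * (if k % p = 0 then 1 else if k % p = 1 then -1 else 0)) := by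
  have := Fact.mk hp
  rw [Set.ncard_setOf_multiset_eq_card_filter_sym, one_div,
    eq_inv_mul_iff_mul_eq₀ (Nat.cast_ne_zero.2 hp.ne_zero)]
  exact_mod_cast card_mul_card_sym_nonzero_sum_eq_zero p k

/-- The count of multisets of size `k` of nonzero residues mod a prime `p` summing
to `0`. -/
theorem count_zero_sum_multisets (p k : ℕ) (hp : p.Prime) (hk : 3 ≤ k) :
    (({s : Multiset (ZMod p) | Multiset.card s = k ∧ (∀ x ∈ s, x ≠ 0) ∧ s.sum = 0}.ncard : ℚ)) =
      (1 / (p : ℚ)) * (((p + k - 2).choose k : ℚ) +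
        ((p : ℚ) - 1) * (if k % p = 0 then 1 else if k % p = 1 then -1 else 0)) :=
  count_zero_sum_multisets_general p k hp
end

section
/- For integers a, b ≥ 1, the binomial coefficient C(a+b, b) satisfies C(a+b, b) ≤ 4^{√(ab)}. -/
open Real

/-- Key analytic inequality: `1 + t² ≤ 2^t` for `t ∈ [0,1]`. -/
lemma one_add_sq_le_two_rpow {t : ℝ} (h0 : 0 ≤ t) (h1 : t ≤ 1) :
    1 + t ^ 2 ≤ (2 : ℝ) ^ t := by
  have hlog : (2 : ℝ) ^ t = Real.exp (Real.log 2 * t) := by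
    rw [Real.rpow_def_of_pos (by norm_num)]
  have hL1 : Real.log 2 < 0.6931471808 := Real.log_two_lt_d9
  have hL0 : 0.6931471803 < Real.log 2 := Real.log_two_gt_d9
  rcases le_total t (1 / 2) with h | h
  · -- use `exp x ≥ 1 + x`
    have hexp := Real.add_one_le_exp (Real.log 2 * t)
    rw [hlog]
    nlinarith
  · -- use `exp (log 2 * t) = 2 * exp (log 2 * (t - 1))` and `exp x ≥ 1 + x`
    have hexp := Real.add_one_le_exp (Real.log 2 * (t - 1))
    have h2 : Real.exp (Real.log 2 * t) = 2 * Real.exp (Real.log 2 * (t - 1)) := by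
      rw [show Real.log 2 * t = Real.log 2 + Real.log 2 * (t - 1) by ring,
        Real.exp_add, Real.exp_log (by norm_num : (0:ℝ) < 2)]
    rw [hlog, h2]
    nlinarith [Real.exp_pos (Real.log 2 * (t - 1))]

/-- Base case: `C(2b, b) ≤ 4^b` over the naturals. -/
lemma choose_two_mul_le (b : ℕ) : (2 * b).choose b ≤ 4 ^ b := by
  calc (2 * b).choose b ≤ ∑ m ∈ Finset.range (2 * b + 1), (2 * b).choose m :=
        Finset.single_le_sum (fun i _ => Nat.zero_le _)
          (Finset.mem_range.mpr (by omega))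
    _ = 2 ^ (2 * b) := Nat.sum_range_choose (2 * b)
    _ = 4 ^ b := by rw [pow_mul]; norm_num

/-- Induction step core: for naturals `b ≤ a`, stepping `a → a+1`. -/
lemma step_ineq (a b : ℕ) (hb : 1 ≤ b) (hba : b ≤ a)
    (ih : (((a + b).choose b : ℝ)) ≤ (4 : ℝ) ^ (Real.sqrt a * Real.sqrt b)) :
    (((a + 1 + b).choose b : ℝ)) ≤ (4 : ℝ) ^ (Real.sqrt (a + 1) * Real.sqrt b) := by
  have ha1 : (0 : ℝ) < (a : ℝ) + 1 := by positivity
  set t : ℝ := Real.sqrt b / Real.sqrt (a + 1) with ht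
  have hsa : Real.sqrt a ^ 2 = (a : ℝ) := Real.sq_sqrt (by positivity)
  have hsa1 : Real.sqrt (a + 1) ^ 2 = (a : ℝ) + 1 := Real.sq_sqrt (by positivity)
  have hsb : Real.sqrt b ^ 2 = (b : ℝ) := Real.sq_sqrt (by positivity)
  have hsa1pos : 0 < Real.sqrt ((a : ℝ) + 1) := Real.sqrt_pos.mpr ha1
  have hsbpos : 0 < Real.sqrt (b : ℝ) := Real.sqrt_pos.mpr (by exact_mod_cast hb)
  have hsann : 0 ≤ Real.sqrt (a : ℝ) := Real.sqrt_nonneg _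
  have ht0 : 0 ≤ t := by positivity
  have ht1 : t ≤ 1 := by
    rw [ht, div_le_one hsa1pos]
    exact Real.sqrt_le_sqrt (by exact_mod_cast (by omega : b ≤ a + 1))
  have ht2 : t ^ 2 = (b : ℝ) / ((a : ℝ) + 1) := by
    rw [ht, div_pow, hsb, hsa1]
  -- Pascal-type identity
  have hid : ((a + b).choose b) * (a + b + 1) = ((a + b + 1).choose b) * (a + 1) := by
    have := Nat.choose_mul_succ_eq (a + b) b
    have h2 : a + b + 1 - b = a + 1 := by omega
    rw [h2] at this
    exact this
  have hidR : (((a + 1 + b).choose b : ℝ)) =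
      (((a + b).choose b : ℝ)) * (((a : ℝ) + b + 1) / ((a : ℝ) + 1)) := by
    have : (((a + b).choose b : ℝ)) * ((a : ℝ) + b + 1)
        = (((a + b + 1).choose b : ℝ)) * ((a : ℝ) + 1) := by exact_mod_cast hid
    have hrw : a + 1 + b = a + b + 1 := by omega
    rw [hrw]
    field_simp
    linarith [this]
  -- ratio bound: (a+b+1)/(a+1) = 1 + t² ≤ 2^t
  have hratio : ((a : ℝ) + b + 1) / ((a : ℝ) + 1) ≤ (2 : ℝ) ^ t := by
    have : ((a : ℝ) + b + 1) / ((a : ℝ) + 1) = 1 + t ^ 2 := by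
      rw [ht2]; field_simp; ring
    rw [this]
    exact one_add_sq_le_two_rpow ht0 ht1
  -- exponent bound: t ≤ 2 * (√(a+1) - √a) * √b
  have hexp : t ≤ 2 * (Real.sqrt (a + 1) * Real.sqrt b - Real.sqrt a * Real.sqrt b) := by
    rw [ht, div_le_iff₀ hsa1pos] at *
    nlinarith [sq_nonneg (Real.sqrt (a+1) - Real.sqrt a), sq_nonneg (2 * Real.sqrt a * Real.sqrt (a+1) - 2*(a:ℝ) - 1)]
  -- combine
  have h2t : (2 : ℝ) ^ t ≤ (4 : ℝ) ^ (Real.sqrt (a + 1) * Real.sqrt b - Real.sqrt a * Real.sqrt b) := by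
    have h4 : (4 : ℝ) ^ (Real.sqrt (a + 1) * Real.sqrt b - Real.sqrt a * Real.sqrt b)
        = (2 : ℝ) ^ (2 * (Real.sqrt (a + 1) * Real.sqrt b - Real.sqrt a * Real.sqrt b)) := by
      rw [show (4:ℝ) = (2:ℝ) ^ (2:ℝ) by
            rw [show (2:ℝ) = ((2:ℕ):ℝ) by norm_num, Real.rpow_natCast]; norm_num,
          ← Real.rpow_mul (by norm_num)]
    rw [h4]
    exact Real.rpow_le_rpow_of_exponent_le (by norm_num) hexp
  have hcnn : (0 : ℝ) ≤ (((a + b).choose b : ℝ)) := by positivity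
  have hratnn : (0 : ℝ) ≤ ((a : ℝ) + b + 1) / ((a : ℝ) + 1) := by positivity
  calc (((a + 1 + b).choose b : ℝ))
      = (((a + b).choose b : ℝ)) * (((a : ℝ) + b + 1) / ((a : ℝ) + 1)) := hidR
    _ ≤ (4 : ℝ) ^ (Real.sqrt a * Real.sqrt b) * ((2:ℝ) ^ t) := by
        apply mul_le_mul ih hratio hratnn (by positivity)
    _ ≤ (4 : ℝ) ^ (Real.sqrt a * Real.sqrt b) *
          (4 : ℝ) ^ (Real.sqrt (a + 1) * Real.sqrt b - Real.sqrt a * Real.sqrt b) := by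
        apply mul_le_mul_of_nonneg_left h2t (by positivity)
    _ = (4 : ℝ) ^ (Real.sqrt (a + 1) * Real.sqrt b) := by
        rw [← Real.rpow_add (by norm_num)]; ring_nf

/-- Main auxiliary: by induction on `d`, for `a = b + d`. -/
lemma aux (d b : ℕ) (hb : 1 ≤ b) :
    (((b + d + b).choose b : ℝ)) ≤ (4 : ℝ) ^ (Real.sqrt (b + d : ℕ) * Real.sqrt b) := by
  induction d with
  | zero =>
    have hbase : ((b + 0 + b).choose b : ℝ) ≤ ((4:ℝ) ^ b : ℝ) := by
      have := choose_two_mul_le b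
      have h2 : b + 0 + b = 2 * b := by omega
      rw [h2]
      exact_mod_cast this
    have : Real.sqrt (b + 0 : ℕ) * Real.sqrt b = (b : ℝ) := by
      simp [Real.mul_self_sqrt (by positivity : (0:ℝ) ≤ (b:ℝ))]
    rw [this]
    rw [Real.rpow_natCast]
    exact hbase
  | succ n ih =>
    have key := step_ineq (b + n) b hb (by omega) (by
      convert ih using 3 <;> push_cast <;> ring_nf)
    convert key using 3 <;> push_cast <;> ring_nf

/-- The binomial bound `C(a+b, b) ≤ 4^√(ab)`. -/
theorem choose_le_four_rpow_sqrt (a b : ℕ) (ha : 1 ≤ a) (hb : 1 ≤ b) :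
    (((a + b).choose b : ℝ)) ≤ (4 : ℝ) ^ Real.sqrt ((a : ℝ) * (b : ℝ)) := by
  have hsqrt : ∀ x y : ℕ, Real.sqrt ((x : ℝ) * (y : ℝ)) = Real.sqrt x * Real.sqrt y := by
    intro x y
    exact Real.sqrt_mul (by positivity) _
  rcases le_total b a with h | h
  · have := aux (a - b) b hb
    have h2 : b + (a - b) = a := by omega
    rw [h2] at this
    rw [hsqrt]
    exact this
  · have := aux (b - a) a ha
    have h2 : a + (b - a) = b := by omega
    rw [h2] at this
    have h3 : (a + b).choose b = (b + a).choose a := by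
      rw [show a + b = b + a by omega]
      rw [← Nat.choose_symm (by omega : a ≤ b + a), show b + a - a = b by omega]
    rw [h3, hsqrt, mul_comm (Real.sqrt a) (Real.sqrt b)]
    exact this
end
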